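/- arXiv:1412.6635 — 2 statements merged into one kernel-verified Lean document; each statement's English description precedes it below -/
import Mathlib

section
/- In the Kingman n-coalescent, for a fixed set A ⊆ {1,...,n} with |A| = i (1 ≤ i ≤ n−1) and 1 ≤ j ≤ n−i, the probability that the branch supporting exactly the leaves in A ends at level j equals P(J_A = j) = (2j / C(n,i)) · (n−j−1)! / ((n−1)(n−2)···(n−i) · (n−j−i)!). In particular P(J_A = j) ≤ (2j/(n−1)) · 1/C(n,i). -/
/-!
Count histories by conditioning on the first merge. Deleting the top level of a history from a
partition `P` leaves a history from `P` with the merged pair coalesced; hence there are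
`W(p) = ∏_{2 ≤ m ≤ p} C(m, 2)` histories from a partition with `p` blocks. If `A` is a union of
blocks, `a` of them inside `A` and `b` outside, a merge of two blocks inside `A` or two outside
keeps the event "the branch of `A` ends at level `j`" intact, a mixed merge makes it impossible,
and when only `j + 1` blocks are left the event means that `A` is one of the merged pair. The
count `j · W(a) · W(b) · C(a+b-j-1, a-1)` solves the resulting recursion. For singletons,
`a = i` and `b = n - i`, and `2^(p-1) W(p) = p! (p-1)!` turns the ratio into the stated formula.
-/

open Finset

/-- A (purely topological) history of the Kingman `n`-coalescent: `c k` is the set of blocks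
of the partition when `k` lineages remain; at each level `2 ≤ k ≤ n` a pair of blocks merges.
A history is uniformly distributed among all such merging histories. -/
def IsHistory (n : ℕ) (c : ℕ → Finset (Finset (Fin n))) : Prop :=
  (∀ k, k = 0 ∨ n < k → c k = ∅) ∧
  c n = Finset.univ.image (fun i => ({i} : Finset (Fin n))) ∧
  ∀ k, 2 ≤ k → k ≤ n → ∃ B₁ ∈ c k, ∃ B₂ ∈ c k, B₁ ≠ B₂ ∧
    c (k - 1) = (c k \ {B₁, B₂}) ∪ {B₁ ∪ B₂}

/-- Probability of an event under the uniform distribution on coalescent histories. -/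
noncomputable def histProb (n : ℕ) (E : (ℕ → Finset (Finset (Fin n))) → Prop) : ℝ :=
  ({c | IsHistory n c ∧ E c}.ncard : ℝ) / ({c | IsHistory n c}.ncard : ℝ)

/-- Expectation of a functional under the uniform distribution on coalescent histories. -/
noncomputable def histExp (n : ℕ) (f : (ℕ → Finset (Finset (Fin n))) → ℝ) : ℝ :=
  (∑ᶠ c ∈ {c | IsHistory n c}, f c) / ({c | IsHistory n c}.ncard : ℝ)

/-- `KLevel A c` is the initial level of the branch supporting exactly the leaves in `A`:
the largest number of blocks `k` at which `A` is a block (`0` if `A` is never a block,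
corresponding to the convention `K_A = ∞`). -/
noncomputable def KLevel {n : ℕ} (A : Finset (Fin n))
    (c : ℕ → Finset (Finset (Fin n))) : ℕ :=
  sSup {k | A ∈ c k}

/-- `JLevel A c` is the final level of the branch supporting exactly the leaves in `A`:
the largest level `j < K_A` at which `A` is not a block (`0` if no such branch exists,
corresponding to the convention `J_A = ∞`). -/
noncomputable def JLevel {n : ℕ} (A : Finset (Fin n))
    (c : ℕ → Finset (Finset (Fin n))) : ℕ :=
  sSup {j | j < KLevel A c ∧ A ∉ c j}

open scoped Nat

theorem Finset.sum_powersetCard_eq_filter_add_filter_not {β M : Type*} [DecidableEq β]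
    [AddCommMonoid M] (p : β → Prop) [DecidablePred p] {s : Finset β} {k : ℕ} (hk : k ≠ 0)
    {f : Finset β → M}
    (hf : ∀ q ∈ s.powersetCard k, (∃ x ∈ q, p x) → (∃ y ∈ q, ¬ p y) → f q = 0) :
    ∑ q ∈ s.powersetCard k, f q =
      ∑ q ∈ (s.filter p).powersetCard k, f q + ∑ q ∈ (s.filter (¬ p ·)).powersetCard k, f q := by
  have hdisj : Disjoint ((s.filter p).powersetCard k) ((s.filter (¬ p ·)).powersetCard k) := by
    refine disjoint_left.2 fun q h₁ h₂ => ?_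
    obtain ⟨x, hx⟩ := card_pos.1 ((mem_powersetCard.1 h₁).2 ▸ Nat.pos_of_ne_zero hk)
    exact (mem_filter.1 ((mem_powersetCard.1 h₂).1 hx)).2
      (mem_filter.1 ((mem_powersetCard.1 h₁).1 hx)).2
  rw [← sum_union hdisj]
  refine (sum_subset (union_subset (powersetCard_mono (filter_subset _ _))
    (powersetCard_mono (filter_subset _ _))) fun q hq hq' => ?_).symm
  obtain ⟨hqs, hqk⟩ := mem_powersetCard.1 hq
  simp only [mem_union, mem_powersetCard, hqk, and_true, not_or, subset_iff, mem_filter,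
    not_forall] at hq'
  obtain ⟨⟨y, hy, hy'⟩, ⟨x, hx, hx'⟩⟩ := hq'
  exact hf q hq ⟨x, hx, not_and_not_right.1 hx' (hqs hx)⟩ ⟨y, hy, fun h => hy' ⟨hqs hy, h⟩⟩

theorem Nat.nonempty_of_pos_sSup {s : Set ℕ} (h : 0 < sSup s) : s.Nonempty :=
  Set.nonempty_iff_ne_empty.2 fun hs => by simp [hs] at h

theorem Nat.cast_descFactorial_eq_prod_range {R : Type*} [CommRing R] (N k : ℕ) :
    (N.descFactorial k : R) = ∏ m ∈ range k, ((N : R) - m) := by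
  rw [← descPochhammer_eval_eq_descFactorial, descPochhammer_eval_eq_prod_range]

theorem Nat.descFactorial_mul_succ_le {m N : ℕ} (h : m ≤ N) (k : ℕ) :
    m.descFactorial k * (N + 1) ≤ (N + 1).descFactorial (k + 1) := by
  rw [Nat.succ_descFactorial_succ, mul_comm]
  exact Nat.mul_le_mul_left _ (Nat.descFactorial_le k h)

namespace Coalescent

variable {α : Type*}

def IsPartition (P : Finset (Finset α)) : Prop :=
  ∅ ∉ P ∧ (P : Set (Finset α)).PairwiseDisjoint id

theorem IsPartition.eq_of_mem_of_mem {P : Finset (Finset α)} {B C : Finset α} (hP : IsPartition P)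
    (hB : B ∈ P) (hC : C ∈ P) {x : α} (hxB : x ∈ B) (hxC : x ∈ C) : B = C :=
  hP.2.elim_finset hB hC x hxB hxC

theorem IsPartition.nonempty {P : Finset (Finset α)} {B : Finset α} (hP : IsPartition P)
    (hB : B ∈ P) : B.Nonempty :=
  nonempty_iff_ne_empty.2 fun h => hP.1 (h ▸ hB)

variable [DecidableEq α]

def merge (P q : Finset (Finset α)) : Finset (Finset α) :=
  insert (q.sup id) (P \ q)

section Partition

variable {P q : Finset (Finset α)} {B C : Finset α}

theorem IsPartition.sup_notMem (hP : IsPartition P) (hq : q ∈ P.powersetCard 2) :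
    q.sup id ∉ P := by
  obtain ⟨hqP, hq2⟩ := mem_powersetCard.1 hq
  obtain ⟨B₁, B₂, hne, rfl⟩ := card_eq_two.1 hq2
  have h₁ : B₁ ∈ P := hqP (by simp)
  have h₂ : B₂ ∈ P := hqP (by simp)
  obtain ⟨x, hx⟩ := hP.nonempty h₁
  obtain ⟨y, hy⟩ := hP.nonempty h₂
  intro hmem
  simp only [sup_insert, sup_singleton, id] at hmem
  have e₁ := hP.eq_of_mem_of_mem hmem h₁ (mem_union_left _ hx) hx
  have e₂ := hP.eq_of_mem_of_mem hmem h₂ (mem_union_right _ hy) hy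
  exact hne (e₁.symm.trans e₂)

theorem IsPartition.sup_nonempty (hP : IsPartition P) (hq : q ∈ P.powersetCard 2) :
    (q.sup id).Nonempty := by
  obtain ⟨hqP, hq2⟩ := mem_powersetCard.1 hq
  obtain ⟨B, hB⟩ := card_pos.1 (hq2 ▸ two_pos : 0 < q.card)
  exact (hP.nonempty (hqP hB)).mono (le_sup (f := id) hB)

theorem isPartition_merge (hP : IsPartition P) (hq : q ∈ P.powersetCard 2) :
    IsPartition (merge P q) := by
  have hqP := (mem_powersetCard.1 hq).1
  refine ⟨?_, ?_⟩
  · rw [merge, mem_insert, not_or]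
    exact ⟨fun h => (hP.sup_nonempty hq).ne_empty h.symm,
      fun h => hP.1 (mem_sdiff.1 h).1⟩
  · rw [merge, coe_insert, Set.pairwiseDisjoint_insert]
    refine ⟨hP.2.subset (by simp), fun D hD _ => Finset.disjoint_sup_left.2 fun B hB => ?_⟩
    obtain ⟨hDP, hDq⟩ := mem_sdiff.1 hD
    exact hP.2 (hqP hB) hDP fun h => hDq (h ▸ hB)

theorem card_merge (hqP : q ⊆ P) (hq2 : q.card = 2) (hsup : q.sup id ∉ P) :
    (merge P q).card = P.card - 1 := by
  have h2 : 2 ≤ P.card := hq2 ▸ card_le_card hqP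
  rw [merge, card_insert_of_notMem fun h => hsup (mem_sdiff.1 h).1, card_sdiff_of_subset hqP,
    hq2]
  omega

theorem IsPartition.card_merge (hP : IsPartition P) (hq : q ∈ P.powersetCard 2) :
    (merge P q).card = P.card - 1 :=
  Coalescent.card_merge (mem_powersetCard.1 hq).1 (mem_powersetCard.1 hq).2 (hP.sup_notMem hq)

theorem sdiff_merge (hqP : q ⊆ P) (hsup : q.sup id ∉ P) : P \ merge P q = q := by
  ext B
  simp only [merge, mem_sdiff, mem_insert, not_or, not_and, not_not]
  exact ⟨fun ⟨hB, _, h⟩ => h hB, fun hB => ⟨hqP hB, fun h => hsup (h ▸ hqP hB), fun _ => hB⟩⟩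

theorem sup_merge (hqP : q ⊆ P) : (merge P q).sup id = P.sup id := by
  rw [merge, sup_insert, id, ← sup_union, union_sdiff_of_subset hqP]

theorem filter_merge_of_sup (p : Finset α → Prop) [DecidablePred p]
    (hsup : p (q.sup id)) : (merge P q).filter p = merge (P.filter p) q := by
  ext B
  simp only [merge, mem_filter, mem_insert, mem_sdiff]
  constructor
  · rintro ⟨rfl | ⟨hB, hBq⟩, hpB⟩
    exacts [Or.inl rfl, Or.inr ⟨⟨hB, hpB⟩, hBq⟩]
  · rintro (rfl | ⟨⟨hB, hpB⟩, hBq⟩)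
    exacts [⟨Or.inl rfl, hsup⟩, ⟨Or.inr ⟨hB, hBq⟩, hpB⟩]

theorem filter_merge_of_forall_not (p : Finset α → Prop) [DecidablePred p]
    (hq : ∀ B ∈ q, ¬ p B) (hsup : ¬ p (q.sup id)) : (merge P q).filter p = P.filter p := by
  ext B
  simp only [merge, mem_filter, mem_insert, mem_sdiff]
  constructor
  · rintro ⟨rfl | ⟨hB, -⟩, hpB⟩
    exacts [absurd hpB hsup, ⟨hB, hpB⟩]
  · rintro ⟨hB, hpB⟩
    exact ⟨Or.inr ⟨hB, fun h => hq B h hpB⟩, hpB⟩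

theorem card_filter_merge_of_mem_powersetCard (p : Finset α → Prop) [DecidablePred p]
    (hP : IsPartition P) (hq : q ∈ (P.filter p).powersetCard 2) (hsup : p (q.sup id)) :
    ((merge P q).filter p).card = (P.filter p).card - 1 ∧
      ((merge P q).filter (¬ p ·)).card = (P.filter (¬ p ·)).card := by
  obtain ⟨hqP, hq2⟩ := mem_powersetCard.1 hq
  have hq' : q ∈ P.powersetCard 2 := powersetCard_mono (filter_subset _ _) hq
  refine ⟨?_, ?_⟩
  · rw [filter_merge_of_sup p hsup]
    exact card_merge hqP hq2 fun h => hP.sup_notMem hq' (mem_filter.1 h).1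
  · rw [filter_merge_of_forall_not _ (fun B hB h => h (mem_filter.1 (hqP hB)).2)
      (not_not.2 hsup)]

theorem exists_superset_mem_merge (hB : B ∈ P) : ∃ C ∈ merge P q, B ⊆ C := by
  by_cases hBq : B ∈ q
  · exact ⟨q.sup id, mem_insert_self _ _, le_sup (f := id) hBq⟩
  · exact ⟨B, mem_insert_of_mem (mem_sdiff.2 ⟨hB, hBq⟩), Subset.rfl⟩

theorem exists_subset_of_mem_merge (hqP : q ⊆ P) (hC : C ∈ merge P q) {x : α} (hx : x ∈ C) :
    ∃ B ∈ P, B ⊆ C ∧ x ∈ B := by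
  rcases mem_insert.1 hC with rfl | hC
  · obtain ⟨B, hB, hxB⟩ := mem_sup.1 hx
    exact ⟨B, hqP hB, le_sup (f := id) hB, hxB⟩
  · exact ⟨C, (mem_sdiff.1 hC).1, Subset.rfl, hx⟩

theorem exists_pair_iff_exists_merge (S T : Finset (Finset α)) :
    (∃ B₁ ∈ S, ∃ B₂ ∈ S, B₁ ≠ B₂ ∧ T = (S \ {B₁, B₂}) ∪ {B₁ ∪ B₂}) ↔
      ∃ q ∈ S.powersetCard 2, T = merge S q := by
  constructor
  · rintro ⟨B₁, h₁, B₂, h₂, hne, rfl⟩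
    refine ⟨{B₁, B₂}, mem_powersetCard.2 ⟨insert_subset h₁ (singleton_subset_iff.2 h₂),
      card_pair hne⟩, ?_⟩
    simp [merge, union_singleton]
  · rintro ⟨q, hq, rfl⟩
    obtain ⟨hqS, hq2⟩ := mem_powersetCard.1 hq
    obtain ⟨B₁, B₂, hne, rfl⟩ := card_eq_two.1 hq2
    exact ⟨B₁, hqS (by simp), B₂, hqS (by simp), hne, by simp [merge, union_singleton]⟩

end Partition

def IsUnionOfBlocks (P : Finset (Finset α)) (A : Finset α) : Prop :=
  (∀ B ∈ P, B ⊆ A ∨ Disjoint B A) ∧ A ⊆ P.sup id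

section UnionOfBlocks

variable {P q : Finset (Finset α)} {A : Finset α}

theorem IsUnionOfBlocks.exists_subset (hA : IsUnionOfBlocks P A) {x : α} (hx : x ∈ A) :
    ∃ D ∈ P, D ⊆ A ∧ x ∈ D := by
  obtain ⟨D, hD, hxD⟩ := mem_sup.1 (hA.2 hx)
  exact ⟨D, hD, (hA.1 D hD).resolve_right fun h => disjoint_left.1 h hxD hx, hxD⟩

theorem IsUnionOfBlocks.merge (hA : IsUnionOfBlocks P A) (hqP : q ⊆ P)
    (hsup : q.sup id ⊆ A ∨ Disjoint (q.sup id) A) : IsUnionOfBlocks (merge P q) A := by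
  refine ⟨fun B hB => ?_, (sup_merge hqP).symm ▸ hA.2⟩
  rcases mem_insert.1 hB with rfl | hB
  exacts [hsup, hA.1 B (mem_sdiff.1 hB).1]

theorem IsUnionOfBlocks.filter_nonempty (hA : IsUnionOfBlocks P A) (hAne : A.Nonempty) :
    (P.filter (· ⊆ A)).Nonempty := by
  obtain ⟨x, hx⟩ := hAne
  obtain ⟨D, hD, hDA, -⟩ := hA.exists_subset hx
  exact ⟨D, mem_filter.2 ⟨hD, hDA⟩⟩

theorem IsUnionOfBlocks.mem_of_card_filter_eq_one (hA : IsUnionOfBlocks P A)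
    (h1 : (P.filter (· ⊆ A)).card = 1) : A ∈ P := by
  obtain ⟨B, hB⟩ := card_eq_one.1 h1
  have hBP : B ∈ P ∧ B ⊆ A := mem_filter.1 (hB ▸ mem_singleton_self B)
  suffices A ⊆ B from Subset.antisymm this hBP.2 ▸ hBP.1
  intro x hx
  obtain ⟨D, hD, hDA, hxD⟩ := hA.exists_subset hx
  have : D ∈ P.filter (· ⊆ A) := mem_filter.2 ⟨hD, hDA⟩
  rw [hB, mem_singleton] at this
  exact this ▸ hxD

theorem IsUnionOfBlocks.disjoint_sup (hA : IsUnionOfBlocks P A) (hq : q ⊆ P.filter (¬ · ⊆ A)) :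
    Disjoint (q.sup id) A :=
  Finset.disjoint_sup_left.2 fun B hB =>
    (hA.1 B (mem_filter.1 (hq hB)).1).resolve_left (mem_filter.1 (hq hB)).2

theorem not_isUnionOfBlocks_merge (hP : IsPartition P) (hq : q ∈ P.powersetCard 2)
    {B C : Finset α} (hB : B ∈ q) (hBA : B ⊆ A) (hC : C ∈ q) (hCA : ¬ C ⊆ A) :
    ¬ IsUnionOfBlocks (merge P q) A := by
  intro hAq
  rcases hAq.1 (q.sup id) (mem_insert_self _ _) with h | h
  · exact hCA ((le_sup (f := id) hC).trans h)
  · obtain ⟨x, hx⟩ := hP.nonempty ((mem_powersetCard.1 hq).1 hB)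
    exact disjoint_left.1 h (le_sup (f := id) hB hx) (hBA hx)

end UnionOfBlocks

def IsHistoryFrom (P : Finset (Finset α)) (c : ℕ → Finset (Finset α)) : Prop :=
  (∀ k, k = 0 ∨ P.card < k → c k = ∅) ∧ c P.card = P ∧
    ∀ k, 1 ≤ k → k < P.card → ∃ q ∈ (c (k + 1)).powersetCard 2, c k = merge (c (k + 1)) q

section History

variable {P : Finset (Finset α)} {c : ℕ → Finset (Finset α)} {A B : Finset α} {m : ℕ}

theorem IsHistoryFrom.mem_Icc_of_mem (hc : IsHistoryFrom P c) (hB : B ∈ c m) :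
    m ∈ Set.Icc 1 P.card := by
  by_contra h
  rw [hc.1 m (by simp only [Set.mem_Icc, not_and_or, not_le] at h; omega)] at hB
  exact notMem_empty B hB

theorem IsHistoryFrom.isPartition_and_card (hP : IsPartition P) (hc : IsHistoryFrom P c)
    (h1 : 1 ≤ m) (hm : m ≤ P.card) : IsPartition (c m) ∧ (c m).card = m := by
  induction hm using Nat.decreasingInduction with
  | self => rw [hc.2.1]; exact ⟨hP, rfl⟩
  | of_succ k hk ih =>
    obtain ⟨hpart, hcard⟩ := ih (by omega)
    obtain ⟨q, hq, hck⟩ := hc.2.2 k h1 hk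
    rw [hck, hpart.card_merge hq, hcard]
    exact ⟨isPartition_merge hpart hq, rfl⟩

theorem IsHistoryFrom.exists_superset (hc : IsHistoryFrom P c) (h1 : 1 ≤ m) {l : ℕ}
    (hml : m ≤ l) (hB : B ∈ c l) : ∃ C ∈ c m, B ⊆ C := by
  induction l, hml using Nat.le_induction generalizing B with
  | base => exact ⟨B, hB, Subset.rfl⟩
  | succ l hml ih =>
    obtain ⟨q, -, hcl⟩ := hc.2.2 l (by omega) (hc.mem_Icc_of_mem hB).2
    obtain ⟨C', hC', hBC'⟩ := exists_superset_mem_merge (q := q) hB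
    obtain ⟨C, hC, hC'C⟩ := ih (hcl ▸ hC')
    exact ⟨C, hC, hBC'.trans hC'C⟩

theorem IsHistoryFrom.exists_subset (hc : IsHistoryFrom P c) (hB : B ∈ c m) {x : α}
    (hx : x ∈ B) : ∃ D ∈ P, D ⊆ B ∧ x ∈ D := by
  obtain ⟨h1, hm⟩ := hc.mem_Icc_of_mem hB
  induction hm using Nat.decreasingInduction generalizing B with
  | self => exact ⟨B, hc.2.1 ▸ hB, Subset.rfl, hx⟩
  | of_succ k hk ih =>
    obtain ⟨q, hq, hck⟩ := hc.2.2 k h1 hk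
    obtain ⟨B', hB', hB'B, hxB'⟩ :=
      exists_subset_of_mem_merge (mem_powersetCard.1 hq).1 (hck ▸ hB) hx
    obtain ⟨D, hD, hDB', hxD⟩ := ih hB' hxB' (by omega)
    exact ⟨D, hD, hDB'.trans hB'B, hxD⟩

theorem IsHistoryFrom.mem_of_le_of_le (hP : IsPartition P) (hc : IsHistoryFrom P c)
    (hA : A.Nonempty) {l h : ℕ} (hl : A ∈ c l) (hh : A ∈ c h) (hlm : l ≤ m) (hmh : m ≤ h) :
    A ∈ c m := by
  obtain ⟨h1, hlP⟩ := hc.mem_Icc_of_mem hl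
  obtain ⟨C, hC, hAC⟩ := hc.exists_superset (h1.trans hlm) hmh hh
  obtain ⟨D, hD, hCD⟩ := hc.exists_superset h1 hlm hC
  obtain ⟨x, hx⟩ := hA
  have hAD : A = D :=
    (hc.isPartition_and_card hP h1 hlP).1.eq_of_mem_of_mem hl hD hx (hCD (hAC hx))
  rwa [Subset.antisymm hAC (hAD ▸ hCD)]

theorem IsHistoryFrom.isUnionOfBlocks (hP : IsPartition P) (hc : IsHistoryFrom P c)
    (hA : A ∈ c m) : IsUnionOfBlocks P A := by
  refine ⟨fun B hB => or_iff_not_imp_right.2 fun h => ?_, fun x hx => ?_⟩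
  · obtain ⟨x, hxB, hxA⟩ := not_disjoint_iff.1 h
    obtain ⟨D, hD, hDA, hxD⟩ := hc.exists_subset hA hxA
    exact hP.eq_of_mem_of_mem hB hD hxB hxD ▸ hDA
  · obtain ⟨D, hD, -, hxD⟩ := hc.exists_subset hA hx
    exact mem_sup.2 ⟨D, hD, hxD⟩

theorem IsHistoryFrom.le_card_filter_not_subset (hP : IsPartition P) (hc : IsHistoryFrom P c)
    {j : ℕ} (hA : A ∈ c (j + 1)) : j ≤ (P.filter (¬ · ⊆ A)).card := by
  obtain ⟨h1, hj⟩ := hc.mem_Icc_of_mem hA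
  obtain ⟨hpart, hcard⟩ := hc.isPartition_and_card hP h1 hj
  have hs : ∀ C ∈ (c (j + 1)).erase A, ∃ D ∈ P.filter (¬ · ⊆ A), D ⊆ C := by
    intro C hC
    obtain ⟨hCA, hC⟩ := mem_erase.1 hC
    obtain ⟨x, hx⟩ := hpart.nonempty hC
    obtain ⟨D, hD, hDC, hxD⟩ := hc.exists_subset hC hx
    refine ⟨D, mem_filter.2 ⟨hD, fun hDA => ?_⟩, hDC⟩
    exact disjoint_left.1 (hpart.2 hC hA hCA) hx (hDA hxD)
  have ht : ∀ D ∈ P.filter (¬ · ⊆ A),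
      ({C ∈ (c (j + 1)).erase A | D ⊆ C} : Set (Finset α)).Subsingleton := by
    intro D hD
    obtain ⟨x, hx⟩ := hP.nonempty (mem_filter.1 hD).1
    rintro C₁ ⟨h₁, hD₁⟩ C₂ ⟨h₂, hD₂⟩
    exact hpart.eq_of_mem_of_mem (mem_of_mem_erase h₁) (mem_of_mem_erase h₂) (hD₁ hx) (hD₂ hx)
  have := card_le_card_of_forall_subsingleton (fun C D : Finset α => D ⊆ C) hs ht
  rwa [card_erase_of_mem hA, hcard, Nat.add_sub_cancel] at this

end History

section Decomposition

variable {P q : Finset (Finset α)} {c : ℕ → Finset (Finset α)}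

open Function

theorem IsHistoryFrom.exists_merge_eq (hc : IsHistoryFrom P c) (h2 : 2 ≤ P.card) :
    ∃ q ∈ P.powersetCard 2, c (P.card - 1) = merge P q := by
  have := hc.2.2 (P.card - 1) (by omega) (by omega)
  rwa [Nat.sub_add_cancel (by omega), hc.2.1] at this

theorem IsHistoryFrom.update_card_empty (hP : IsPartition P) (hc : IsHistoryFrom P c)
    (hq : q ∈ P.powersetCard 2) (hcq : c (P.card - 1) = merge P q) :
    IsHistoryFrom (merge P q) (update c P.card ∅) := by
  have hcard := hP.card_merge hq
  have h2 : 2 ≤ P.card := powersetCard_nonempty.1 ⟨q, hq⟩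
  refine ⟨fun k hk => ?_, ?_, fun k h1 hk => ?_⟩
  · rcases eq_or_ne k P.card with rfl | hne
    · exact update_self ..
    · rw [update_of_ne hne]
      exact hc.1 k (by omega)
  · rw [hcard, update_of_ne (by omega), hcq]
  · rw [update_of_ne (by omega), update_of_ne (by omega)]
    exact hc.2.2 k h1 (by omega)

theorem IsHistoryFrom.update_card (hP : IsPartition P) (hq : q ∈ P.powersetCard 2)
    (hc : IsHistoryFrom (merge P q) c) : IsHistoryFrom P (update c P.card P) := by
  have hcard := hP.card_merge hq
  have h2 : 2 ≤ P.card := powersetCard_nonempty.1 ⟨q, hq⟩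
  refine ⟨fun k hk => ?_, update_self .., fun k h1 hk => ?_⟩
  · rw [update_of_ne (by omega)]
    exact hc.1 k (by omega)
  · rw [update_of_ne hk.ne]
    obtain hk' | hk' := (show k + 1 ≤ P.card by omega).eq_or_lt
    · have htop := hc.2.1
      rw [hcard, ← hk', Nat.add_sub_cancel] at htop
      rw [hk', update_self, htop]
      exact ⟨q, hq, rfl⟩
    · rw [update_of_ne hk'.ne]
      exact hc.2.2 k h1 (by omega)

theorem setOf_isHistoryFrom_and_eq_biUnion (hP : IsPartition P) (h2 : 2 ≤ P.card)
    (E : (ℕ → Finset (Finset α)) → Prop) :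
    {c | IsHistoryFrom P c ∧ E c} = ⋃ q ∈ P.powersetCard 2,
      (update · P.card P) '' {c | IsHistoryFrom (merge P q) c ∧ E (update c P.card P)} := by
  ext c
  simp only [Set.mem_ofPred_eq, Set.mem_iUnion, Set.mem_image, exists_prop]
  constructor
  · rintro ⟨hc, hE⟩
    obtain ⟨q, hq, hcq⟩ := hc.exists_merge_eq h2
    have hupd : update (update c P.card ∅) P.card P = c := by
      rw [update_idem]
      exact update_eq_self_iff.2 hc.2.1.symm
    exact ⟨q, hq, _, ⟨hc.update_card_empty hP hq hcq, by rwa [hupd]⟩, hupd⟩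
  · rintro ⟨q, hq, c, ⟨hc, hE⟩, rfl⟩
    exact ⟨hc.update_card hP hq, hE⟩

theorem ncard_setOf_isHistoryFrom_and (hP : IsPartition P) (h2 : 2 ≤ P.card)
    (hfin : ∀ q ∈ P.powersetCard 2, {c | IsHistoryFrom (merge P q) c}.Finite)
    (E : (ℕ → Finset (Finset α)) → Prop) :
    {c | IsHistoryFrom P c ∧ E c}.ncard = ∑ q ∈ P.powersetCard 2,
      {c | IsHistoryFrom (merge P q) c ∧ E (update c P.card P)}.ncard := by
  have htop : ∀ q ∈ P.powersetCard 2, ∀ c, IsHistoryFrom (merge P q) c →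
      c (P.card - 1) = merge P q := fun q hq c hc => hP.card_merge hq ▸ hc.2.1
  have hinj : ∀ q ∈ P.powersetCard 2, Set.InjOn (update · P.card P)
      {c | IsHistoryFrom (merge P q) c ∧ E (update c P.card P)} := by
    intro q hq c₁ h₁ c₂ h₂ h
    funext k
    rcases eq_or_ne k P.card with hk | hk
    · have hlt : (merge P q).card < k := by rw [hP.card_merge hq]; omega
      rw [h₁.1.1 k (Or.inr hlt), h₂.1.1 k (Or.inr hlt)]
    · simpa [update_of_ne hk] using congrFun h k
  have hdisj : (P.powersetCard 2 : Set (Finset (Finset α))).PairwiseDisjoint fun q =>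
      (update · P.card P) '' {c | IsHistoryFrom (merge P q) c ∧ E (update c P.card P)} := by
    intro q₁ hq₁ q₂ hq₂ hne
    refine Set.disjoint_left.2 ?_
    rintro _ ⟨c₁, ⟨h₁, -⟩, rfl⟩ ⟨c₂, ⟨h₂, -⟩, h⟩
    have e := congrFun h (P.card - 1)
    dsimp only at e
    rw [update_of_ne (by omega), update_of_ne (by omega), htop q₂ hq₂ c₂ h₂,
      htop q₁ hq₁ c₁ h₁] at e
    apply hne
    rw [← sdiff_merge (mem_powersetCard.1 hq₁).1 (hP.sup_notMem hq₁), ← e,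
      sdiff_merge (mem_powersetCard.1 hq₂).1 (hP.sup_notMem hq₂)]
  rw [setOf_isHistoryFrom_and_eq_biUnion hP h2 E, ← set_biUnion_coe,
    Set.Finite.ncard_biUnion (finite_toSet _)
      (fun q hq => ((hfin q hq).subset fun c hc => hc.1).image _) hdisj,
    finsum_mem_coe_finset]
  exact sum_congr rfl fun q hq => (hinj q hq).ncard_image

end Decomposition

def numHistories (p : ℕ) : ℕ :=
  ∏ m ∈ Icc 2 p, m.choose 2

theorem numHistories_of_le_one {p : ℕ} (hp : p ≤ 1) : numHistories p = 1 := by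
  rw [numHistories, Icc_eq_empty (by omega), prod_empty]

theorem choose_two_mul_numHistories_sub_one {p : ℕ} (hp : 2 ≤ p) :
    p.choose 2 * numHistories (p - 1) = numHistories p := by
  obtain ⟨r, rfl⟩ : ∃ r, p = r + 1 := ⟨p - 1, by omega⟩
  rw [numHistories, numHistories, Nat.add_sub_cancel, prod_Icc_succ_top (by omega), mul_comm]

theorem numHistories_pos (p : ℕ) : 0 < numHistories p :=
  prod_pos fun _ hm => Nat.choose_pos (mem_Icc.1 hm).1

theorem two_pow_mul_numHistories (p : ℕ) : 2 ^ (p - 1) * numHistories p = p ! * (p - 1)! := by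
  induction p with
  | zero => simp [numHistories_of_le_one]
  | succ p ih =>
    obtain rfl | hp := p.eq_zero_or_pos
    · simp [numHistories_of_le_one]
    have hchoose : (p + 1).choose 2 * 2 = (p + 1) * p := by
      rw [← Nat.add_one_mul_choose_eq, Nat.choose_one_right]
    have hpow : 2 ^ p = 2 ^ (p - 1) * 2 := by rw [← pow_succ, Nat.sub_add_cancel hp]
    rw [← choose_two_mul_numHistories_sub_one (by omega), Nat.add_sub_cancel, hpow,
      Nat.factorial_succ]
    calc 2 ^ (p - 1) * 2 * ((p + 1).choose 2 * numHistories p)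
        = (p + 1).choose 2 * 2 * (2 ^ (p - 1) * numHistories p) := by ring
      _ = (p + 1) * p ! * (p * (p - 1)!) := by rw [hchoose, ih]; ring
      _ = (p + 1) * p ! * p ! := by rw [Nat.mul_factorial_pred hp.ne']

section Count

variable {P : Finset (Finset α)}

theorem setOf_isHistoryFrom_of_card_le_one (hP : P.card ≤ 1) :
    {c | IsHistoryFrom P c} = {Function.update (fun _ => ∅) P.card P} := by
  ext c
  simp only [Set.mem_ofPred_eq, Set.mem_singleton_iff]
  constructor
  · intro hc
    funext k
    rcases eq_or_ne k P.card with rfl | hk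
    · rw [Function.update_self, hc.2.1]
    · rw [Function.update_of_ne hk]
      exact hc.1 k (by omega)
  · rintro rfl
    refine ⟨fun k hk => ?_, Function.update_self .., fun k h1 hk => by omega⟩
    rcases eq_or_ne k P.card with rfl | hne
    · rw [Function.update_self]
      exact card_eq_zero.1 (by omega)
    · exact Function.update_of_ne hne ..

theorem ncard_setOf_isHistoryFrom (hP : IsPartition P) :
    {c | IsHistoryFrom P c}.ncard = numHistories P.card := by
  induction hp : P.card using Nat.strong_induction_on generalizing P with
  | _ p ih =>
  obtain hp1 | hp2 := le_or_gt p 1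
  · rw [setOf_isHistoryFrom_of_card_le_one (hp ▸ hp1), Set.ncard_singleton,
      numHistories_of_le_one hp1]
  have hmerge : ∀ q ∈ P.powersetCard 2,
      {c | IsHistoryFrom (merge P q) c}.ncard = numHistories (p - 1) := fun q hq =>
    ih (p - 1) (by omega) (isPartition_merge hP hq) (by rw [hP.card_merge hq, hp])
  have hsum := ncard_setOf_isHistoryFrom_and hP (by omega)
    (fun q hq => Set.finite_of_ncard_pos (by rw [hmerge q hq]; exact numHistories_pos _))
    fun _ => True
  simp only [and_true] at hsum
  rw [hsum, sum_congr rfl hmerge, sum_const, card_powersetCard, hp, smul_eq_mul,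
    choose_two_mul_numHistories_sub_one hp2]

theorem finite_setOf_isHistoryFrom (hP : IsPartition P) : {c | IsHistoryFrom P c}.Finite :=
  Set.finite_of_ncard_pos (by rw [ncard_setOf_isHistoryFrom hP]; exact numHistories_pos _)

end Count

def historiesEndingAt (P : Finset (Finset α)) (A : Finset α) (j : ℕ) :
    Set (ℕ → Finset (Finset α)) :=
  {c | IsHistoryFrom P c ∧ A ∈ c (j + 1) ∧ A ∉ c j}

/-- Interleave the `a - 1` merges inside `A` with the `b - j` merges outside it, merge `A` with
one of the `j` remaining blocks, and finish with any history of the last `j` blocks: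
`C(a+b-j-1, a-1) · W(a) · (W(b) / W(j)) · j · W(j)` ways, `W = numHistories`. -/
def branchEndCount (a b j : ℕ) : ℕ :=
  j * numHistories a * numHistories b * (a + b - j - 1).choose (a - 1)

theorem branchEndCount_eq_zero {a b j : ℕ} (hjab : j + 1 ≤ a + b) (hb : b < j) :
    branchEndCount a b j = 0 := by
  rw [branchEndCount, Nat.choose_eq_zero_of_lt (by omega), mul_zero]

theorem branchEndCount_one_self (j : ℕ) : branchEndCount 1 j j = j * numHistories j := by
  simp [branchEndCount, numHistories_of_le_one]

theorem branchEndCount_add_branchEndCount {a b j : ℕ} (ha : 1 ≤ a) (hj : 1 ≤ j)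
    (hab : j + 2 ≤ a + b) :
    a.choose 2 * branchEndCount (a - 1) b j + b.choose 2 * branchEndCount a (b - 1) j =
      branchEndCount a b j := by
  obtain rfl | ha := ha.eq_or_lt
  · simp only [branchEndCount, Nat.sub_self, Nat.choose_zero_right]
    rw [Nat.choose_eq_zero_of_lt one_lt_two,
      ← choose_two_mul_numHistories_sub_one (p := b) (by omega)]
    ring
  obtain ⟨N, hN⟩ : ∃ N, a + b - j - 1 = N + 1 := ⟨a + b - j - 2, by omega⟩
  have hpascal : (N + 1).choose (a - 1) = N.choose (a - 2) + N.choose (a - 1) := by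
    rw [show a - 1 = a - 2 + 1 by omega, Nat.choose_succ_succ']
  have hN₁ : a - 1 + b - j - 1 = N := by omega
  have hWa := choose_two_mul_numHistories_sub_one (p := a) (by omega)
  obtain hb | hb := le_or_gt 2 b
  · have hN₂ : a + (b - 1) - j - 1 = N := by omega
    rw [branchEndCount, branchEndCount, branchEndCount, hN, hN₁, hN₂, hpascal,
      show a - 1 - 1 = a - 2 by omega, ← hWa, ← choose_two_mul_numHistories_sub_one hb]
    ring
  · rw [Nat.choose_eq_zero_of_lt hb, zero_mul, add_zero, branchEndCount, branchEndCount, hN, hN₁,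
      hpascal, show a - 1 - 1 = a - 2 by omega, Nat.choose_eq_zero_of_lt (show N < a - 1 by omega),
      ← hWa]
    ring

theorem branchEndCount_mul_eq {n i j : ℕ} (hi : 1 ≤ i) (hj : 1 ≤ j) (hijn : i + j ≤ n) :
    branchEndCount i (n - i) j * (n.choose i * (n - 1).descFactorial i) =
      2 * j * (n - j - 1).descFactorial (i - 1) * numHistories n := by
  have hpow : 2 ^ (n - 1) = 2 ^ (i - 1) * 2 ^ (n - i - 1) * 2 := by
    rw [← pow_add, ← pow_succ]
    congr 1
    omega
  have hC : (i - 1)! * (n - j - 1).choose (i - 1) = (n - j - 1).descFactorial (i - 1) :=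
    (Nat.descFactorial_eq_factorial_mul_choose _ _).symm
  have hCn : n.choose i * i ! * (n - i)! = n ! := Nat.choose_mul_factorial_mul_factorial (by omega)
  have hD : (n - i - 1)! * (n - 1).descFactorial i = (n - 1)! := by
    rw [Nat.sub_right_comm, Nat.factorial_mul_descFactorial (by omega)]
  apply Nat.eq_of_mul_eq_mul_left (pow_pos two_pos (n - 1))
  calc 2 ^ (n - 1) * (branchEndCount i (n - i) j * (n.choose i * (n - 1).descFactorial i))
      = 2 * j * (2 ^ (i - 1) * numHistories i) * (2 ^ (n - i - 1) * numHistories (n - i)) *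
          (n - j - 1).choose (i - 1) * n.choose i * (n - 1).descFactorial i := by
        rw [branchEndCount, hpow, show i + (n - i) - j - 1 = n - j - 1 by omega]
        ring
    _ = 2 * j * ((i - 1)! * (n - j - 1).choose (i - 1)) * (n.choose i * i ! * (n - i)!) *
          ((n - i - 1)! * (n - 1).descFactorial i) := by
        rw [two_pow_mul_numHistories, two_pow_mul_numHistories]
        ring
    _ = 2 ^ (n - 1) * (2 * j * (n - j - 1).descFactorial (i - 1) * numHistories n) := by
        rw [hC, hCn, hD, mul_assoc _ n !, ← two_pow_mul_numHistories]
        ring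

theorem branchEndCount_div_numHistories {n i j : ℕ} (hi : 1 ≤ i) (hj : 1 ≤ j)
    (hijn : i + j ≤ n) :
    (branchEndCount i (n - i) j : ℝ) / numHistories n =
      2 * j / n.choose i * ((n - j - 1).descFactorial (i - 1) / (n - 1).descFactorial i) := by
  have hC : (n.choose i : ℝ) ≠ 0 := by exact_mod_cast (Nat.choose_pos (by omega)).ne'
  have hD : ((n - 1).descFactorial i : ℝ) ≠ 0 := by
    exact_mod_cast Nat.descFactorial_eq_zero_iff_lt.not.2 (by omega)
  have hW : (numHistories n : ℝ) ≠ 0 := by exact_mod_cast (numHistories_pos n).ne'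
  rw [div_mul_div_comm, div_eq_div_iff hW (mul_ne_zero hC hD)]
  exact_mod_cast branchEndCount_mul_eq hi hj hijn

theorem descFactorial_div_descFactorial_le {n i j : ℕ} (hi : 1 ≤ i) (hj : 1 ≤ j)
    (hijn : i + j ≤ n) :
    ((n - j - 1).descFactorial (i - 1) : ℝ) / (n - 1).descFactorial i ≤ 1 / (n - 1) := by
  have hD : (0 : ℝ) < (n - 1).descFactorial i := by
    exact_mod_cast Nat.pos_of_ne_zero (Nat.descFactorial_eq_zero_iff_lt.not.2 (by omega))
  have hn : (1 : ℝ) < n := by exact_mod_cast (show 1 < n by omega)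
  rw [div_le_div_iff₀ hD (by linarith), one_mul]
  have hle := Nat.descFactorial_mul_succ_le (show n - j - 1 ≤ n - 2 by omega) (i - 1)
  rw [show n - 2 + 1 = n - 1 by omega, Nat.sub_add_cancel hi] at hle
  have := (Nat.cast_le (α := ℝ)).2 hle
  push_cast [Nat.cast_sub (show 1 ≤ n by omega)] at this
  exact this

section EndingAt

variable {P : Finset (Finset α)} {A : Finset α} {j : ℕ}

open Function

theorem historiesEndingAt_eq_empty_of_card_lt (hP : IsPartition P)
    (hb : (P.filter (¬ · ⊆ A)).card < j) : historiesEndingAt P A j = ∅ :=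
  Set.eq_empty_of_forall_notMem fun _ ⟨hc, hAc, _⟩ =>
    (hc.le_card_filter_not_subset hP hAc).not_gt hb

theorem historiesEndingAt_eq_empty_of_not_isUnionOfBlocks (hP : IsPartition P)
    (hA : ¬ IsUnionOfBlocks P A) : historiesEndingAt P A j = ∅ :=
  Set.eq_empty_of_forall_notMem fun _ ⟨hc, hAc, _⟩ => hA (hc.isUnionOfBlocks hP hAc)

theorem ncard_historiesEndingAt_eq_sum (hP : IsPartition P) (hjP : j + 1 < P.card) :
    (historiesEndingAt P A j).ncard =
      ∑ q ∈ P.powersetCard 2, (historiesEndingAt (merge P q) A j).ncard := by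
  rw [historiesEndingAt, ncard_setOf_isHistoryFrom_and hP (by omega)
    (fun q hq => finite_setOf_isHistoryFrom (isPartition_merge hP hq))]
  simp only [historiesEndingAt, update_of_ne (show j + 1 ≠ P.card by omega),
    update_of_ne (show j ≠ P.card by omega)]

theorem ncard_historiesEndingAt_of_mem (hP : IsPartition P) (hAP : A ∈ P) (hj : 1 ≤ j)
    (hPj : P.card = j + 1) : (historiesEndingAt P A j).ncard = j * numHistories j := by
  have hval : ∀ q ∈ P.powersetCard 2, {c | IsHistoryFrom (merge P q) c ∧
      (A ∈ update c P.card P (j + 1) ∧ A ∉ update c P.card P j)}.ncard =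
      if {A} ⊆ q then numHistories j else 0 := by
    intro q hq
    have hcard : (merge P q).card = j := by rw [hP.card_merge hq, hPj, Nat.add_sub_cancel]
    have hiff : ∀ c, IsHistoryFrom (merge P q) c →
        (A ∈ update c P.card P (j + 1) ∧ A ∉ update c P.card P j ↔ {A} ⊆ q) := by
      intro c hc
      rw [← hPj, update_self, update_of_ne (by omega), ← hcard, hc.2.1, merge,
        singleton_subset_iff]
      have hne : A ≠ q.sup id := fun h => hP.sup_notMem hq (h ▸ hAP)
      simp [hAP, hne]
    rw [Set.ext fun c => and_congr_right (hiff c)]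
    split_ifs with h
    · simp only [h, and_true]
      rw [ncard_setOf_isHistoryFrom (isPartition_merge hP hq), hcard]
    · simp [h]
  rw [historiesEndingAt, ncard_setOf_isHistoryFrom_and hP (by omega)
    (fun q hq => finite_setOf_isHistoryFrom (isPartition_merge hP hq)), sum_congr rfl hval,
    ← sum_filter, sum_const, card_filter_powersetCard_subset _ _ _ (singleton_subset_iff.2 hAP)
    (by simp), card_singleton, hPj, smul_eq_mul]
  simp

theorem ncard_historiesEndingAt_of_forall_merge (hP : IsPartition P) (hA : IsUnionOfBlocks P A)
    (hjP : j + 1 < P.card)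
    (hmerge : ∀ q ∈ P.powersetCard 2, IsUnionOfBlocks (merge P q) A →
      (historiesEndingAt (merge P q) A j).ncard = branchEndCount
        ((merge P q).filter (· ⊆ A)).card ((merge P q).filter (¬ · ⊆ A)).card j) :
    (historiesEndingAt P A j).ncard =
      (P.filter (· ⊆ A)).card.choose 2 *
          branchEndCount ((P.filter (· ⊆ A)).card - 1) (P.filter (¬ · ⊆ A)).card j +
        (P.filter (¬ · ⊆ A)).card.choose 2 *
          branchEndCount (P.filter (· ⊆ A)).card ((P.filter (¬ · ⊆ A)).card - 1) j := by
  have hmixed : ∀ q ∈ P.powersetCard 2, (∃ B ∈ q, B ⊆ A) → (∃ C ∈ q, ¬ C ⊆ A) →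
      (historiesEndingAt (merge P q) A j).ncard = 0 := by
    rintro q hq ⟨B, hB, hBA⟩ ⟨C, hC, hCA⟩
    rw [historiesEndingAt_eq_empty_of_not_isUnionOfBlocks (isPartition_merge hP hq)
      (not_isUnionOfBlocks_merge hP hq hB hBA hC hCA), Set.ncard_empty]
  have hinside : ∀ q ∈ (P.filter (· ⊆ A)).powersetCard 2,
      (historiesEndingAt (merge P q) A j).ncard =
        branchEndCount ((P.filter (· ⊆ A)).card - 1) (P.filter (¬ · ⊆ A)).card j := by
    intro q hq
    have hqP : q ∈ P.powersetCard 2 := powersetCard_mono (filter_subset _ _) hq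
    have hsup : q.sup id ⊆ A :=
      Finset.sup_le fun B hB => (mem_filter.1 ((mem_powersetCard.1 hq).1 hB)).2
    obtain ⟨hI, hO⟩ := card_filter_merge_of_mem_powersetCard (· ⊆ A) hP hq hsup
    rw [hmerge q hqP (hA.merge (mem_powersetCard.1 hqP).1 (.inl hsup)), hI, hO]
  have houtside : ∀ q ∈ (P.filter (¬ · ⊆ A)).powersetCard 2,
      (historiesEndingAt (merge P q) A j).ncard =
        branchEndCount (P.filter (· ⊆ A)).card ((P.filter (¬ · ⊆ A)).card - 1) j := by
    intro q hq
    have hqP : q ∈ P.powersetCard 2 := powersetCard_mono (filter_subset _ _) hq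
    have hsup := hA.disjoint_sup (mem_powersetCard.1 hq).1
    have hsupA : ¬ q.sup id ⊆ A := fun h =>
      (hP.sup_nonempty hqP).ne_empty (disjoint_self.1 (hsup.mono_right h))
    obtain ⟨hO, hI⟩ := card_filter_merge_of_mem_powersetCard (¬ · ⊆ A) hP hq hsupA
    simp only [not_not] at hI
    rw [hmerge q hqP (hA.merge (mem_powersetCard.1 hqP).1 (.inr hsup)), hI, hO]
  rw [ncard_historiesEndingAt_eq_sum hP hjP, sum_powersetCard_eq_filter_add_filter_not
    (· ⊆ A) two_ne_zero hmixed, sum_congr rfl hinside, sum_congr rfl houtside, sum_const,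
    sum_const, card_powersetCard, card_powersetCard, smul_eq_mul, smul_eq_mul]

theorem ncard_historiesEndingAt (hP : IsPartition P) (hA : IsUnionOfBlocks P A)
    (hAne : A.Nonempty) (hj : 1 ≤ j) (hjP : j + 1 ≤ P.card) :
    (historiesEndingAt P A j).ncard =
      branchEndCount (P.filter (· ⊆ A)).card (P.filter (¬ · ⊆ A)).card j := by
  induction hp : P.card using Nat.strong_induction_on generalizing P with
  | _ p ih =>
  have hab : (P.filter (· ⊆ A)).card + (P.filter (¬ · ⊆ A)).card = p :=
    hp ▸ card_filter_add_card_filter_not _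
  have ha := card_pos.2 (hA.filter_nonempty hAne)
  obtain hb | hb := lt_or_ge (P.filter (¬ · ⊆ A)).card j
  · rw [historiesEndingAt_eq_empty_of_card_lt hP hb, Set.ncard_empty,
      branchEndCount_eq_zero (by omega) hb]
  obtain hjp | hjp := (hp ▸ hjP).eq_or_lt
  · have h1 : (P.filter (· ⊆ A)).card = 1 := by omega
    rw [ncard_historiesEndingAt_of_mem hP (hA.mem_of_card_filter_eq_one h1) hj (by omega), h1,
      show (P.filter (¬ · ⊆ A)).card = j by omega, branchEndCount_one_self]
  rw [ncard_historiesEndingAt_of_forall_merge hP hA (by omega) fun q hq hAq =>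
    ih (p - 1) (by omega) (isPartition_merge hP hq) hAq (by rw [hP.card_merge hq]; omega)
      (by rw [hP.card_merge hq, hp])]
  exact branchEndCount_add_branchEndCount ha hj (by omega)

end EndingAt

section Singletons

variable (s : Finset α) {A : Finset α}

theorem isPartition_image_singleton : IsPartition (s.image ({·} : α → Finset α)) := by
  refine ⟨by simp, fun B hB C hC hne => ?_⟩
  obtain ⟨x, -, rfl⟩ := mem_image.1 hB
  obtain ⟨y, -, rfl⟩ := mem_image.1 hC
  exact disjoint_singleton.2 fun h => hne (h ▸ rfl)

theorem isUnionOfBlocks_image_singleton (hA : A ⊆ s) :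
    IsUnionOfBlocks (s.image ({·} : α → Finset α)) A := by
  refine ⟨fun B hB => ?_, fun x hx => mem_sup.2 ⟨{x}, mem_image_of_mem _ (hA hx), by simp⟩⟩
  obtain ⟨x, -, rfl⟩ := mem_image.1 hB
  by_cases hx : x ∈ A
  exacts [.inl (singleton_subset_iff.2 hx), .inr (disjoint_singleton_left.2 hx)]

theorem card_image_singleton : (s.image ({·} : α → Finset α)).card = s.card :=
  card_image_of_injective _ singleton_injective

theorem card_filter_subset_image_singleton (hA : A ⊆ s) :
    ((s.image ({·} : α → Finset α)).filter (· ⊆ A)).card = A.card := by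
  have : (s.image ({·} : α → Finset α)).filter (· ⊆ A) = A.image ({·} : α → Finset α) := by
    ext B
    simp only [mem_filter, mem_image]
    constructor
    · rintro ⟨⟨x, -, rfl⟩, hx⟩
      exact ⟨x, singleton_subset_iff.1 hx, rfl⟩
    · rintro ⟨x, hx, rfl⟩
      exact ⟨⟨x, hA hx, rfl⟩, singleton_subset_iff.2 hx⟩
  rw [this, card_image_singleton]

end Singletons

theorem isHistory_iff_isHistoryFrom {n : ℕ} {c : ℕ → Finset (Finset (Fin n))} :
    IsHistory n c ↔ IsHistoryFrom (univ.image ({·} : Fin n → Finset (Fin n))) c := by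
  rw [IsHistory, IsHistoryFrom, card_image_singleton, card_univ, Fintype.card_fin]
  refine and_congr Iff.rfl (and_congr Iff.rfl ⟨fun h k h1 hk => ?_, fun h k h2 hk => ?_⟩)
  · have := h (k + 1) (by omega) hk
    rwa [Nat.add_sub_cancel, exists_pair_iff_exists_merge] at this
  · obtain ⟨k, rfl⟩ : ∃ k', k = k' + 1 := ⟨k - 1, by omega⟩
    rw [Nat.add_sub_cancel, exists_pair_iff_exists_merge]
    exact h k (by omega) (by omega)

theorem IsHistoryFrom.jLevel_eq_iff {n : ℕ} {P : Finset (Finset (Fin n))}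
    {c : ℕ → Finset (Finset (Fin n))} {A : Finset (Fin n)} (hP : IsPartition P)
    (hc : IsHistoryFrom P c) (hA : A.Nonempty) {j : ℕ} (hj : 1 ≤ j) :
    JLevel A c = j ↔ A ∈ c (j + 1) ∧ A ∉ c j := by
  have hS : BddAbove {k | A ∈ c k} := ⟨P.card, fun k hk => (hc.mem_Icc_of_mem hk).2⟩
  have hT : BddAbove {m | m < KLevel A c ∧ A ∉ c m} := ⟨KLevel A c, fun m hm => hm.1.le⟩
  constructor
  · intro hJ
    obtain ⟨hjK, hjA⟩ : j < KLevel A c ∧ A ∉ c j :=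
      hJ ▸ Nat.sSup_mem (Nat.nonempty_of_pos_sSup (by rw [← JLevel, hJ]; omega)) hT
    have hK : A ∈ c (KLevel A c) := Nat.sSup_mem (Nat.nonempty_of_pos_sSup (by
      rw [← KLevel]; omega)) hS
    refine ⟨?_, hjA⟩
    obtain h | h := (show j + 1 ≤ KLevel A c from hjK).eq_or_lt
    · rwa [h]
    · by_contra hA'
      have := le_csSup hT ⟨h, hA'⟩
      rw [← JLevel, hJ] at this
      omega
  · rintro ⟨h1, h2⟩
    have hK : A ∈ c (KLevel A c) := Nat.sSup_mem ⟨j + 1, h1⟩ hS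
    have hjK : j + 1 ≤ KLevel A c := le_csSup hS h1
    refine IsGreatest.csSup_eq ⟨⟨by omega, h2⟩, fun m ⟨hmK, hmA⟩ => ?_⟩
    by_contra hmj
    exact hmA (hc.mem_of_le_of_le hP hA h1 hK (by omega) hmK.le)

theorem histProb_jLevel_eq {n i j : ℕ} {A : Finset (Fin n)} (hA : A.card = i) (hi : 1 ≤ i)
    (hj : 1 ≤ j) (hjn : j ≤ n - i) :
    histProb n (fun c => JLevel A c = j) = branchEndCount i (n - i) j / numHistories n := by
  set P := univ.image ({·} : Fin n → Finset (Fin n))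
  have hP : IsPartition P := isPartition_image_singleton univ
  have hPA : IsUnionOfBlocks P A := isUnionOfBlocks_image_singleton univ (subset_univ A)
  have hAne : A.Nonempty := card_pos.1 (by omega)
  have hPcard : P.card = n := by rw [card_image_singleton, card_univ, Fintype.card_fin]
  have hI : (P.filter (· ⊆ A)).card = i := by
    rw [card_filter_subset_image_singleton _ (subset_univ A), hA]
  have hO : (P.filter (¬ · ⊆ A)).card = n - i := by
    have := card_filter_add_card_filter_not (s := P) (· ⊆ A)
    omega
  have hev : {c | IsHistory n c ∧ JLevel A c = j} = historiesEndingAt P A j := by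
    ext c
    simp only [Set.mem_ofPred_eq, historiesEndingAt, isHistory_iff_isHistoryFrom]
    exact and_congr_right fun hc => hc.jLevel_eq_iff hP hAne hj
  have htot : {c | IsHistory n c} = {c | IsHistoryFrom P c} := by
    simp only [isHistory_iff_isHistoryFrom, P]
  rw [histProb, hev, htot, ncard_historiesEndingAt hP hPA hAne hj (by omega),
    ncard_setOf_isHistoryFrom hP, hI, hO, hPcard]

end Coalescent

open Coalescent

theorem stmt5_general (n i j : ℕ) (A : Finset (Fin n)) (hA : A.card = i)
    (hi : 1 ≤ i) (hj : 1 ≤ j) (hjn : j ≤ n - i) :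
    histProb n (fun c => JLevel A c = j) =
      (2 * j / (n.choose i : ℝ)) *
        ((Nat.factorial (n - j - 1) : ℝ) /
          ((∏ m ∈ Finset.range i, ((n : ℝ) - 1 - m)) *
            (Nat.factorial (n - j - i) : ℝ))) ∧
    histProb n (fun c => JLevel A c = j) ≤
      (2 * j / ((n : ℝ) - 1)) * (1 / (n.choose i : ℝ)) := by
  have hD : ∏ m ∈ range i, ((n : ℝ) - 1 - m) = (n - 1).descFactorial i := by
    rw [Nat.cast_descFactorial_eq_prod_range, Nat.cast_sub (by omega), Nat.cast_one]
  have hF : ((n - j - 1)! : ℝ) / ((n - 1).descFactorial i * (n - j - i)!) =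
      (n - j - 1).descFactorial (i - 1) / (n - 1).descFactorial i := by
    rw [← Nat.factorial_mul_descFactorial (show i - 1 ≤ n - j - 1 by omega),
      show n - j - 1 - (i - 1) = n - j - i by omega, Nat.cast_mul, mul_comm, mul_div_mul_right]
    exact_mod_cast (Nat.factorial_pos _).ne'
  rw [histProb_jLevel_eq hA hi hj hjn, branchEndCount_div_numHistories hi hj (by omega), hD, hF]
  refine ⟨rfl, ?_⟩
  calc 2 * j / n.choose i * (((n - j - 1).descFactorial (i - 1) : ℝ) / (n - 1).descFactorial i)
      ≤ 2 * j / n.choose i * (1 / (n - 1)) :=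
        mul_le_mul_of_nonneg_left (descFactorial_div_descFactorial_le hi hj (by omega))
          (by positivity)
    _ = _ := by ring

/-- Distribution of the final level `J_A` in the Kingman `n`-coalescent:
`P(J_A = j) = (2j / C(n,i)) · (n−j−1)! / ((n−1)⋯(n−i) · (n−j−i)!)`, and in particular
`P(J_A = j) ≤ (2j/(n−1)) · 1/C(n,i)`. -/
theorem stmt5 (n i j : ℕ) (A : Finset (Fin n)) (hA : A.card = i)
    (hi : 1 ≤ i) (hin : i ≤ n - 1) (hj : 1 ≤ j) (hjn : j ≤ n - i) :
    histProb n (fun c => JLevel A c = j) =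
      (2 * j / (n.choose i : ℝ)) *
        ((Nat.factorial (n - j - 1) : ℝ) /
          ((∏ m ∈ Finset.range i, ((n : ℝ) - 1 - m)) *
            (Nat.factorial (n - j - i) : ℝ))) ∧
    histProb n (fun c => JLevel A c = j) ≤
      (2 * j / ((n : ℝ) - 1)) * (1 / (n.choose i : ℝ)) :=
  stmt5_general n i j A hA hi hj hjn
end

section
/- In the Kingman n-coalescent, for A with |A| = i ≥ 2 and 2 ≤ k ≤ n−i, the probability that the branch supporting leaves A is formed at level k satisfies P(K_A = k) ≤ i k^2 / ((n−1)(n−2) C(n,i)). -/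
open Finset

/-!
Tracking a history from the top level down, the only information that matters for the event
`K_A = k` is whether `A` is a union of blocks of the current partition and, if so, into how many
blocks `r` it is split. A merge inside `A` lowers `r` by one, a merge outside `A` keeps it, and a
merge straddling `A` destroys the event. Hence the number of histories in which `A` first appears
at level `k` is `branchCount k i n * numHistories k`: a path count for this two-type merging,
times the number of histories below level `k`. Dividing by the total number `numHistories n` of
histories and comparing descending factorials gives the bound.
-/

open Finset Function

namespace KingmanCoalescent

section Merge

variable {α : Type*}

def IsBlockFamily (π : Finset (Finset α)) : Prop :=
  (∀ B ∈ π, B.Nonempty) ∧ (π : Set (Finset α)).PairwiseDisjoint id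

theorem isBlockFamily_empty : IsBlockFamily (∅ : Finset (Finset α)) := by
  simp [IsBlockFamily]

theorem IsBlockFamily.eq_of_not_disjoint {π : Finset (Finset α)} (hπ : IsBlockFamily π)
    {B C : Finset α} (hB : B ∈ π) (hC : C ∈ π) (h : ¬Disjoint B C) : B = C :=
  hπ.2.elim hB hC h

theorem IsBlockFamily.eq_of_subset {π : Finset (Finset α)} (hπ : IsBlockFamily π)
    {B C : Finset α} (hB : B ∈ π) (hC : C ∈ π) (h : B ⊆ C) : B = C :=
  hπ.eq_of_not_disjoint hB hC fun hd =>
    let ⟨_, hx⟩ := hπ.1 B hB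
    disjoint_left.1 hd hx (h hx)

theorem IsBlockFamily.mono {π σ : Finset (Finset α)} (hπ : IsBlockFamily π) (h : σ ⊆ π) :
    IsBlockFamily σ :=
  ⟨fun B hB => hπ.1 B (h hB), hπ.2.subset (coe_subset.2 h)⟩

theorem nonempty_of_mem_powersetCard_two {s q : Finset α} (hq : q ∈ s.powersetCard 2) :
    q.Nonempty :=
  card_pos.1 ((mem_powersetCard.1 hq).2 ▸ two_pos)

variable [DecidableEq α]

theorem filter_powersetCard_subset_eq {s t : Finset α} (h : t ⊆ s) (n : ℕ) :
    (s.powersetCard n).filter (· ⊆ t) = t.powersetCard n := by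
  ext q
  simp only [mem_filter, mem_powersetCard]
  exact ⟨fun ⟨⟨_, hq⟩, hqt⟩ => ⟨hqt, hq⟩, fun ⟨hqt, hq⟩ => ⟨⟨hqt.trans h, hq⟩, hqt⟩⟩

def merge (π q : Finset (Finset α)) : Finset (Finset α) :=
  π \ q ∪ {q.sup id}

def IsMergeStep (π σ : Finset (Finset α)) : Prop :=
  ∃ B₁ ∈ π, ∃ B₂ ∈ π, B₁ ≠ B₂ ∧ σ = π \ {B₁, B₂} ∪ {B₁ ∪ B₂}

theorem isMergeStep_iff {π σ : Finset (Finset α)} :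
    IsMergeStep π σ ↔ ∃ q ∈ π.powersetCard 2, σ = merge π q := by
  simp only [IsMergeStep, merge, mem_powersetCard, card_eq_two]
  constructor
  · rintro ⟨B₁, h₁, B₂, h₂, hne, rfl⟩
    exact ⟨{B₁, B₂}, ⟨insert_subset h₁ (singleton_subset_iff.2 h₂), B₁, B₂, hne, rfl⟩,
      by simp⟩
  · rintro ⟨q, ⟨hq, B₁, B₂, hne, rfl⟩, rfl⟩
    exact ⟨B₁, hq (by simp), B₂, hq (by simp), hne, by simp⟩

namespace IsBlockFamily

variable {π q : Finset (Finset α)} (hπ : IsBlockFamily π)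
include hπ

theorem sup_notMem (hq : q ∈ π.powersetCard 2) : q.sup id ∉ π := by
  obtain ⟨hqπ, B₁, B₂, hne, rfl⟩ := (mem_powersetCard.1 hq).imp_right card_eq_two.1
  intro h
  have h₁ := hπ.eq_of_subset (hqπ (mem_insert_self _ _)) h
    (le_sup (f := id) (mem_insert_self _ _))
  have h₂ := hπ.eq_of_subset (hqπ (mem_insert_of_mem (mem_singleton_self _))) h
    (le_sup (f := id) (mem_insert_of_mem (mem_singleton_self _)))
  exact hne (h₁.trans h₂.symm)

theorem card_merge (hq : q ∈ π.powersetCard 2) : (merge π q).card = π.card - 1 := by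
  obtain ⟨hqπ, hq2⟩ := mem_powersetCard.1 hq
  have hN : q.sup id ∉ π \ q := fun h => hπ.sup_notMem hq (mem_sdiff.1 h).1
  have := card_le_card hqπ
  rw [merge, union_comm, ← insert_eq, card_insert_of_notMem hN, card_sdiff_of_subset hqπ, hq2]
  omega

theorem sdiff_merge (hq : q ∈ π.powersetCard 2) : π \ merge π q = q := by
  have hqπ := (mem_powersetCard.1 hq).1
  ext B
  simp only [merge, mem_sdiff, mem_union, mem_singleton, not_or, not_and, not_not]
  constructor
  · rintro ⟨hB, h, -⟩
    exact h hB
  · intro hB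
    exact ⟨hqπ hB, fun _ => hB, fun h => hπ.sup_notMem hq (h ▸ hqπ hB)⟩

theorem injOn_merge : Set.InjOn (merge π) (π.powersetCard 2) := fun q hq q' hq' h => by
  rw [← hπ.sdiff_merge hq, ← hπ.sdiff_merge hq', h]

theorem isBlockFamily_merge (hq : q ∈ π.powersetCard 2) : IsBlockFamily (merge π q) := by
  have hqπ := (mem_powersetCard.1 hq).1
  have hsup : (q.sup id).Nonempty := by
    obtain ⟨B, hB⟩ := nonempty_of_mem_powersetCard_two hq
    exact (hπ.1 B (hqπ hB)).mono (le_sup (f := id) hB)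
  have hdisj : ∀ B ∈ π \ q, Disjoint B (q.sup id) := fun B hB =>
    Finset.disjoint_sup_right.2 fun C hC =>
      hπ.2 (mem_sdiff.1 hB).1 (hqπ hC) fun h => (mem_sdiff.1 hB).2 (h ▸ hC)
  refine ⟨fun B hB => ?_, fun B hB C hC hBC => ?_⟩
  · rcases mem_union.1 hB with hB | hB
    · exact hπ.1 B (mem_sdiff.1 hB).1
    · exact mem_singleton.1 hB ▸ hsup
  · simp only [KingmanCoalescent.merge, coe_union, coe_singleton, Set.mem_union,
      Set.mem_singleton_iff, mem_coe] at hB hC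
    rcases hB with hB | rfl <;> rcases hC with hC | rfl
    · exact hπ.2 (mem_sdiff.1 hB).1 (mem_sdiff.1 hC).1 hBC
    · exact hdisj B hB
    · exact (hdisj C hC).symm
    · exact absurd rfl hBC

end IsBlockFamily

theorem IsMergeStep.isBlockFamily {σ τ : Finset (Finset α)} (h : IsMergeStep σ τ)
    (hσ : IsBlockFamily σ) : IsBlockFamily τ := by
  obtain ⟨q, hq, rfl⟩ := isMergeStep_iff.1 h
  exact hσ.isBlockFamily_merge hq

theorem IsMergeStep.exists_superset {σ τ : Finset (Finset α)} (h : IsMergeStep σ τ)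
    {B : Finset α} (hB : B ∈ σ) : ∃ B' ∈ τ, B ⊆ B' := by
  obtain ⟨q, hq, rfl⟩ := isMergeStep_iff.1 h
  by_cases hBq : B ∈ q
  · exact ⟨q.sup id, mem_union_right _ (mem_singleton_self _), le_sup (f := id) hBq⟩
  · exact ⟨B, mem_union_left _ (mem_sdiff.2 ⟨hB, hBq⟩), subset_rfl⟩

end Merge

section InnerBlocks

variable {α : Type*} [DecidableEq α] (A : Finset α)

def innerBlocks (π : Finset (Finset α)) : Finset (Finset α) :=
  π.filter (· ⊆ A)

def IsUnionOfBlocks (π : Finset (Finset α)) : Prop :=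
  (innerBlocks A π).sup id = A

instance (π : Finset (Finset α)) : Decidable (IsUnionOfBlocks A π) :=
  inferInstanceAs (Decidable (_ = _))

variable {A} {π q : Finset (Finset α)}

theorem innerBlocks_subset : innerBlocks A π ⊆ π :=
  filter_subset _ _

theorem IsUnionOfBlocks.disjoint_of_not_subset (hA : IsUnionOfBlocks A π)
    (hπ : IsBlockFamily π) {B : Finset α} (hB : B ∈ π) (hBA : ¬B ⊆ A) : Disjoint B A := by
  rw [← hA]
  exact Finset.disjoint_sup_right.2 fun C hC =>
    hπ.2 hB (innerBlocks_subset hC) fun h => hBA (h ▸ (mem_filter.1 hC).2)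

theorem sup_merge (hq : q ⊆ π) : (merge π q).sup id = π.sup id := by
  rw [merge, sup_union, sup_singleton]
  change (π \ q).sup id ⊔ q.sup id = _
  rw [← sup_union, sdiff_union_of_subset hq]

theorem innerBlocks_merge_of_subset (hq : q ⊆ innerBlocks A π) :
    innerBlocks A (merge π q) = merge (innerBlocks A π) q := by
  have hqA : q.sup id ⊆ A := Finset.sup_le fun B hB => (mem_filter.1 (hq hB)).2
  ext B
  simp only [innerBlocks, merge, mem_filter, mem_union, mem_sdiff, mem_singleton]
  constructor
  · rintro ⟨h | rfl, hBA⟩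
    exacts [Or.inl ⟨⟨h.1, hBA⟩, h.2⟩, Or.inr rfl]
  · rintro (⟨⟨h, hBA⟩, hBq⟩ | rfl)
    exacts [⟨Or.inl ⟨h, hBq⟩, hBA⟩, ⟨Or.inr rfl, hqA⟩]

theorem innerBlocks_merge_of_subset_sdiff (hq : q.Nonempty)
    (hqA : q ⊆ π \ innerBlocks A π) : innerBlocks A (merge π q) = innerBlocks A π := by
  obtain ⟨B, hB⟩ := hq
  have hBA : ¬B ⊆ A := fun h =>
    (mem_sdiff.1 (hqA hB)).2 (mem_filter.2 ⟨(mem_sdiff.1 (hqA hB)).1, h⟩)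
  have hsupA : ¬q.sup id ⊆ A := fun h => hBA ((le_sup (f := id) hB).trans h)
  ext C
  simp only [innerBlocks, merge, mem_filter, mem_union, mem_sdiff, mem_singleton]
  constructor
  · rintro ⟨h | rfl, hCA⟩
    exacts [⟨h.1, hCA⟩, absurd hCA hsupA]
  · rintro ⟨hC, hCA⟩
    exact ⟨Or.inl ⟨hC, fun hCq => (mem_sdiff.1 (hqA hCq)).2 (mem_filter.2 ⟨hC, hCA⟩)⟩, hCA⟩

theorem IsBlockFamily.isUnionOfBlocks_merge_iff (hπ : IsBlockFamily π)
    (hq : q ∈ π.powersetCard 2) :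
    IsUnionOfBlocks A (merge π q) ↔
      IsUnionOfBlocks A π ∧ (q ⊆ innerBlocks A π ∨ q ⊆ π \ innerBlocks A π) := by
  have hqπ := (mem_powersetCard.1 hq).1
  have hsup : q ⊆ innerBlocks A π ∨ q ⊆ π \ innerBlocks A π →
      (innerBlocks A (merge π q)).sup id = (innerBlocks A π).sup id := by
    rintro (h | h)
    · rw [innerBlocks_merge_of_subset h, sup_merge h]
    · rw [innerBlocks_merge_of_subset_sdiff (nonempty_of_mem_powersetCard_two hq) h]
  refine ⟨fun hU => ?_, fun ⟨hU, h⟩ => (hsup h).trans hU⟩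
  have hside : q ⊆ innerBlocks A π ∨ q ⊆ π \ innerBlocks A π := by
    by_cases hqA : q.sup id ⊆ A
    · exact Or.inl fun B hB => mem_filter.2 ⟨hqπ hB, (le_sup (f := id) hB).trans hqA⟩
    · have hdisj := hU.disjoint_of_not_subset (hπ.isBlockFamily_merge hq)
        (mem_union_right _ (mem_singleton_self _)) hqA
      refine Or.inr fun B hB => mem_sdiff.2 ⟨hqπ hB, fun hBA => ?_⟩
      obtain ⟨x, hx⟩ := hπ.1 B (hqπ hB)
      exact disjoint_left.1 hdisj (le_sup (f := id) hB hx) ((mem_filter.1 hBA).2 hx)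
  exact ⟨(hsup hside).symm.trans hU, hside⟩

theorem IsBlockFamily.sum_merge (hπ : IsBlockFamily π) (g : ℕ → ℕ) :
    ∑ q ∈ π.powersetCard 2,
        (if IsUnionOfBlocks A (merge π q) then g (innerBlocks A (merge π q)).card else 0) =
      if IsUnionOfBlocks A π then
        (innerBlocks A π).card.choose 2 * g ((innerBlocks A π).card - 1) +
          (π.card - (innerBlocks A π).card).choose 2 * g (innerBlocks A π).card
      else 0 := by
  have hterm : ∀ q ∈ π.powersetCard 2,
      (if IsUnionOfBlocks A (merge π q) then g (innerBlocks A (merge π q)).card else 0) =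
      if IsUnionOfBlocks A π then
        (if q ⊆ innerBlocks A π then g ((innerBlocks A π).card - 1) else 0) +
          (if q ⊆ π \ innerBlocks A π then g (innerBlocks A π).card else 0)
      else 0 := by
    intro q hq
    have hIq : q ⊆ innerBlocks A π → ¬q ⊆ π \ innerBlocks A π := fun h h' => by
      obtain ⟨B, hB⟩ := nonempty_of_mem_powersetCard_two hq
      exact (mem_sdiff.1 (h' hB)).2 (h hB)
    simp only [hπ.isUnionOfBlocks_merge_iff hq]
    by_cases hU : IsUnionOfBlocks A π
    · by_cases hI : q ⊆ innerBlocks A π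
      · have hI' : q ∈ (innerBlocks A π).powersetCard 2 :=
          mem_powersetCard.2 ⟨hI, (mem_powersetCard.1 hq).2⟩
        simp [hU, hI, hIq hI, innerBlocks_merge_of_subset hI,
          (hπ.mono innerBlocks_subset).card_merge hI']
      · by_cases hO : q ⊆ π \ innerBlocks A π
        · simp [hU, hI, hO, innerBlocks_merge_of_subset_sdiff
          (nonempty_of_mem_powersetCard_two hq) hO]
        · simp [hU, hI, hO]
    · simp [hU]
  rw [sum_congr rfl hterm]
  split_ifs
  · rw [sum_add_distrib, ← sum_filter, ← sum_filter,
      filter_powersetCard_subset_eq innerBlocks_subset,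
      filter_powersetCard_subset_eq sdiff_subset, sum_const, sum_const, card_powersetCard,
      card_powersetCard, card_sdiff_of_subset innerBlocks_subset, smul_eq_mul, smul_eq_mul]
  · exact sum_const_zero

theorem IsBlockFamily.mem_merge_and_notMem_iff (hπ : IsBlockFamily π)
    (hq : q ∈ π.powersetCard 2) :
    A ∈ merge π q ∧ A ∉ π ↔ q = innerBlocks A π ∧ IsUnionOfBlocks A π := by
  have hqπ := (mem_powersetCard.1 hq).1
  constructor
  · rintro ⟨hmem, hAπ⟩
    have hA : A = q.sup id := by
      rcases mem_union.1 hmem with h | h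
      exacts [absurd (mem_sdiff.1 h).1 hAπ, mem_singleton.1 h]
    have hqI : q ⊆ innerBlocks A π := fun B hB =>
      mem_filter.2 ⟨hqπ hB, hA ▸ le_sup (f := id) hB⟩
    have hIq : innerBlocks A π ⊆ q := fun C hC => by
      obtain ⟨x, hx⟩ := hπ.1 C (innerBlocks_subset hC)
      obtain ⟨B, hB, hxB⟩ := mem_sup.1 (hA ▸ (mem_filter.1 hC).2 hx)
      rwa [hπ.eq_of_not_disjoint (innerBlocks_subset hC) (hqπ hB)
        (not_disjoint_iff.2 ⟨x, hx, hxB⟩)]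
    have hqI' := Subset.antisymm hqI hIq
    refine ⟨hqI', ?_⟩
    rw [IsUnionOfBlocks, ← hqI', hA]
  · rintro ⟨rfl, hU⟩
    refine ⟨mem_union_right _ (mem_singleton.2 hU.symm), fun hAπ => hπ.sup_notMem hq ?_⟩
    rwa [← hU] at hAπ

theorem isBlockFamily_image_singleton (s : Finset α) :
    IsBlockFamily (s.image fun a => ({a} : Finset α)) := by
  refine ⟨fun B hB => ?_, fun B hB C hC hBC => ?_⟩
  · obtain ⟨a, -, rfl⟩ := mem_image.1 hB
    exact singleton_nonempty a
  · obtain ⟨a, -, rfl⟩ := mem_image.1 (mem_coe.1 hB)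
    obtain ⟨b, -, rfl⟩ := mem_image.1 (mem_coe.1 hC)
    exact disjoint_singleton.2 fun h => hBC (h ▸ rfl)

theorem innerBlocks_image_singleton {A s : Finset α} (hA : A ⊆ s) :
    innerBlocks A (s.image fun a => ({a} : Finset α)) = A.image fun a => {a} := by
  ext B
  simp only [innerBlocks, mem_filter, mem_image]
  constructor
  · rintro ⟨⟨a, -, rfl⟩, ha⟩
    exact ⟨a, singleton_subset_iff.1 ha, rfl⟩
  · rintro ⟨a, ha, rfl⟩
    exact ⟨⟨a, hA ha, rfl⟩, singleton_subset_iff.2 ha⟩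

theorem isUnionOfBlocks_image_singleton {A s : Finset α} (hA : A ⊆ s) :
    IsUnionOfBlocks A (s.image fun a => ({a} : Finset α)) := by
  rw [IsUnionOfBlocks, innerBlocks_image_singleton hA, sup_image]
  exact sup_singleton_eq_self A

end InnerBlocks

section BranchCount

/-- From `m` blocks, `r` of which make up `A`, the number of ways down to level `k + 1` with `A`
split into exactly two blocks and no merge across `A`: the `r - 2` merges inside `A` interleave
with the `m - r - (k - 1)` merges outside it. -/
def branchCount (k r m : ℕ) : ℕ :=
  if 2 ≤ r ∧ k + r ≤ m + 1 then
    (m - (k + 1)).choose (r - 2) * (∏ j ∈ Ioc 2 r, j.choose 2) *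
      ∏ j ∈ Ioc (k - 1) (m - r), j.choose 2
  else 0

theorem branchCount_self_add_one (k r : ℕ) :
    branchCount k r (k + 1) = if r = 2 then 1 else 0 := by
  unfold branchCount
  by_cases hr : r = 2
  · subst hr
    simp [show k + 1 - 2 = k - 1 by omega]
  · rw [if_neg (by omega), if_neg hr]

theorem branchCount_of_eq_add {k m : ℕ} (x y : ℕ) (hk : 1 ≤ k) (hm : m = k + 1 + x + y) :
    branchCount k (x + 2) m =
      (x + y).choose x * (∏ j ∈ Ioc 2 (x + 2), j.choose 2) *
        ∏ j ∈ Ioc (k - 1) (k - 1 + y), j.choose 2 := by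
  rw [branchCount, if_pos (by omega), show m - (k + 1) = x + y by omega, Nat.add_sub_cancel,
    show m - (x + 2) = k - 1 + y by omega]

theorem branchCount_succ {k r m : ℕ} (hk : 1 ≤ k) (hm : k + 1 ≤ m) :
    branchCount k r (m + 1) =
      r.choose 2 * branchCount k (r - 1) m + (m + 1 - r).choose 2 * branchCount k r m := by
  by_cases hr : 2 ≤ r
  swap
  · simp [branchCount, hr, Nat.choose_eq_zero_of_lt (by omega : r < 2)]
  by_cases hkr : k + r ≤ m + 2
  swap
  · simp only [branchCount]
    rw [if_neg (by omega), if_neg (by omega), if_neg (by omega)]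
    simp
  obtain ⟨x, rfl⟩ : ∃ x, r = x + 2 := ⟨r - 2, by omega⟩
  obtain ⟨y, rfl⟩ : ∃ y, m = k + x + y := ⟨m - k - x, by omega⟩
  rcases x with _ | x <;> rcases y with _ | y
  · omega
  · have hdead : branchCount k (0 + 2 - 1) (k + 0 + (y + 1)) = 0 := by simp [branchCount]
    rw [hdead, branchCount_of_eq_add 0 (y + 1) hk (by omega),
      branchCount_of_eq_add 0 y hk (by omega),
      show k + 0 + (y + 1) + 1 - (0 + 2) = k - 1 + y + 1 by omega, ← add_assoc (k - 1) y 1,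
      prod_Ioc_succ_top (show k - 1 ≤ k - 1 + y by omega)]
    simp only [Nat.choose_zero_right]
    ring
  · have hdead : branchCount k (x + 1 + 2) (k + (x + 1) + 0) = 0 := by
      rw [branchCount, if_neg (by omega)]
    rw [hdead, show x + 1 + 2 - 1 = x + 2 by omega, branchCount_of_eq_add (x + 1) 0 hk (by omega),
      branchCount_of_eq_add x 0 hk (by omega), show x + 1 + 2 = x + 2 + 1 by omega,
      prod_Ioc_succ_top (by omega)]
    simp only [add_zero, Nat.choose_self]
    ring
  · rw [show x + 1 + 2 - 1 = x + 2 by omega,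
      branchCount_of_eq_add (x + 1) (y + 1) hk (by omega),
      branchCount_of_eq_add x (y + 1) hk (by omega),
      branchCount_of_eq_add (x + 1) y hk (by omega),
      show k + (x + 1) + (y + 1) + 1 - (x + 1 + 2) = k - 1 + y + 1 by omega,
      show x + 1 + 2 = x + 2 + 1 by omega, ← add_assoc (k - 1) y 1,
      prod_Ioc_succ_top (show 2 ≤ x + 2 by omega),
      prod_Ioc_succ_top (show k - 1 ≤ k - 1 + y by omega),
      show x + 1 + (y + 1) = (x + y + 1) + 1 by omega, Nat.choose_succ_succ',
      show x + (y + 1) = x + y + 1 by omega, show x + 1 + y = x + y + 1 by omega]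
    ring

end BranchCount

section Histories

variable {α : Type*} [DecidableEq α]

def historiesFrom (m : ℕ) (π : Finset (Finset α)) : Set (ℕ → Finset (Finset α)) :=
  {c | (∀ j, j = 0 ∨ m < j → c j = ∅) ∧ c m = π ∧
    ∀ j, 2 ≤ j → j ≤ m → IsMergeStep (c j) (c (j - 1))}

def numHistories (m : ℕ) : ℕ :=
  ∏ j ∈ Ioc 1 m, j.choose 2

theorem numHistories_pos (m : ℕ) : 0 < numHistories m :=
  prod_pos fun _ hj => Nat.choose_pos (mem_Ioc.1 hj).1

variable {m : ℕ} {π : Finset (Finset α)} {c : ℕ → Finset (Finset α)}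

theorem finite_historiesFrom [Finite α] : (historiesFrom m π).Finite := by
  refine Set.Finite.of_finite_image (f := fun c (j : Fin (m + 1)) => c j) (Set.toFinite _) ?_
  intro c hc c' hc' h
  funext j
  rcases le_or_gt j m with hj | hj
  · exact congrFun h ⟨j, Nat.lt_succ_of_le hj⟩
  · rw [hc.1 j (Or.inr hj), hc'.1 j (Or.inr hj)]

theorem historiesFrom_one : historiesFrom 1 π = {update (fun _ => ∅) 1 π} := by
  ext c
  simp only [historiesFrom, Set.mem_ofPred_eq, Set.mem_singleton_iff]
  constructor
  · rintro ⟨hz, h1, -⟩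
    funext j
    rcases eq_or_ne j 1 with rfl | hj
    · simpa using h1
    · rw [update_of_ne hj]
      exact hz j (by omega)
  · rintro rfl
    exact ⟨fun j hj => update_of_ne (by omega) _ _, by simp, fun j _ _ => by omega⟩

theorem historiesFrom_succ (hm : 1 ≤ m) :
    historiesFrom (m + 1) π =
      ⋃ q ∈ π.powersetCard 2, (update · (m + 1) π) '' historiesFrom m (merge π q) := by
  ext c
  simp only [Set.mem_iUnion, Set.mem_image, exists_prop]
  constructor
  · rintro ⟨hz, htop, hstep⟩
    obtain ⟨q, hq, hmerge⟩ := isMergeStep_iff.1 (htop ▸ hstep (m + 1) (by omega) le_rfl)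
    refine ⟨q, hq, update c (m + 1) ∅, ⟨fun j hj => ?_, ?_, fun j hj hjm => ?_⟩, ?_⟩
    · rcases eq_or_ne j (m + 1) with rfl | hne
      · simp
      · rw [update_of_ne hne]
        exact hz j (by omega)
    · rw [update_of_ne (by omega)]
      exact hmerge
    · rw [update_of_ne (by omega), update_of_ne (by omega)]
      exact hstep j hj (by omega)
    · rw [update_idem, ← htop, update_eq_self]
  · rintro ⟨q, hq, c, ⟨hz, hbot, hstep⟩, rfl⟩
    refine ⟨fun j hj => ?_, by simp, fun j hj hjm => ?_⟩
    · rw [update_of_ne (by omega)]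
      exact hz j (by omega)
    · rcases eq_or_ne j (m + 1) with rfl | hne
      · rw [update_self, Nat.add_sub_cancel, update_of_ne (by omega), hbot]
        exact isMergeStep_iff.2 ⟨q, hq, rfl⟩
      · rw [update_of_ne hne, update_of_ne (by omega)]
        exact hstep j hj (by omega)

theorem ncard_sep_historiesFrom_succ [Finite α] (hπ : IsBlockFamily π) (hm : 1 ≤ m)
    (E : (ℕ → Finset (Finset α)) → Prop) :
    {c ∈ historiesFrom (m + 1) π | E c}.ncard =
      ∑ q ∈ π.powersetCard 2,
        {c ∈ historiesFrom m (merge π q) | E (update c (m + 1) π)}.ncard := by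
  have hunion : {c ∈ historiesFrom (m + 1) π | E c} =
      ⋃ q ∈ π.powersetCard 2, (update · (m + 1) π) ''
        {c ∈ historiesFrom m (merge π q) | E (update c (m + 1) π)} := by
    rw [historiesFrom_succ hm]
    ext c
    simp only [Set.mem_ofPred_eq, Set.mem_iUnion, Set.mem_image, exists_prop]
    constructor
    · rintro ⟨⟨q, hq, c, hc, rfl⟩, hE⟩
      exact ⟨q, hq, c, ⟨hc, hE⟩, rfl⟩
    · rintro ⟨q, hq, c, ⟨hc, hE⟩, rfl⟩
      exact ⟨⟨q, hq, c, hc, rfl⟩, hE⟩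
  have hinj : ∀ q, Set.InjOn (update · (m + 1) π)
      {c ∈ historiesFrom m (merge π q) | E (update c (m + 1) π)} := by
    intro q c hc c' hc' h
    funext j
    rcases eq_or_ne j (m + 1) with rfl | hne
    · rw [hc.1.1 _ (Or.inr (by omega)), hc'.1.1 _ (Or.inr (by omega))]
    · simpa [hne] using congrFun h j
  rw [hunion, ← Finset.set_biUnion_coe, Set.Finite.ncard_biUnion (finite_toSet _)
    (fun q _ => (finite_historiesFrom.subset (Set.sep_subset _ _)).image _),
    finsum_mem_coe_finset]
  · exact sum_congr rfl fun q _ => (hinj q).ncard_image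
  · intro q hq q' hq' hne
    refine Set.disjoint_left.2 ?_
    rintro _ ⟨c, hc, rfl⟩ ⟨c', hc', h⟩
    apply hne
    refine hπ.injOn_merge hq hq' ?_
    have := congrFun h m
    dsimp only at this
    rw [update_of_ne (by omega), update_of_ne (by omega)] at this
    rw [← hc.1.2.1, ← hc'.1.2.1, this]

theorem ncard_historiesFrom [Finite α] (hπ : IsBlockFamily π) (hm : 1 ≤ m)
    (hcard : π.card = m) : (historiesFrom m π).ncard = numHistories m := by
  induction m, hm using Nat.le_induction generalizing π with
  | base => simp [historiesFrom_one, numHistories]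
  | succ m hm ih =>
    have := ncard_sep_historiesFrom_succ hπ hm fun _ => True
    simp only [and_true, Set.ofPred_mem_eq] at this
    rw [this, sum_congr rfl fun q hq => ih (hπ.isBlockFamily_merge hq)
      (by rw [hπ.card_merge hq, hcard]; rfl), sum_const, card_powersetCard, hcard, smul_eq_mul,
      numHistories, numHistories, prod_Ioc_succ_top hm, mul_comm]

theorem isBlockFamily_of_mem_historiesFrom (hc : c ∈ historiesFrom m π)
    (hπ : IsBlockFamily π) (j : ℕ) : IsBlockFamily (c j) := by
  rcases lt_or_ge m j with hmj | hjm
  · rw [hc.1 j (Or.inr hmj)]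
    exact isBlockFamily_empty
  induction hjm using Nat.decreasingInduction with
  | self => exact hc.2.1 ▸ hπ
  | of_succ j hj ih =>
    rcases Nat.eq_zero_or_pos j with rfl | hj0
    · rw [hc.1 0 (Or.inl rfl)]
      exact isBlockFamily_empty
    · exact (hc.2.2 (j + 1) (by omega) hj).isBlockFamily ih

theorem exists_superset_of_mem_historiesFrom (hc : c ∈ historiesFrom m π) {i j : ℕ}
    (hi : 1 ≤ i) (hij : i ≤ j) {B : Finset α} (hB : B ∈ c j) : ∃ B' ∈ c i, B ⊆ B' := by
  induction j, hij using Nat.le_induction generalizing B with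
  | base => exact ⟨B, hB, subset_rfl⟩
  | succ j hij ih =>
    have hjm : j + 1 ≤ m := by
      by_contra h
      rw [hc.1 (j + 1) (Or.inr (by omega))] at hB
      exact notMem_empty B hB
    obtain ⟨B'', hB'', hBB''⟩ := (hc.2.2 (j + 1) (by omega) hjm).exists_superset hB
    obtain ⟨B', hB', hB''B'⟩ := ih hB''
    exact ⟨B', hB', hBB''.trans hB''B'⟩

theorem mem_succ_of_mem_historiesFrom (hc : c ∈ historiesFrom m π) (hπ : IsBlockFamily π)
    {A : Finset α} {k j : ℕ} (hk : 1 ≤ k) (hkj : k < j) (hAk : A ∈ c k)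
    (hAj : A ∈ c j) : A ∈ c (k + 1) := by
  obtain ⟨B, hB, hAB⟩ := exists_superset_of_mem_historiesFrom hc (by omega) hkj hAj
  obtain ⟨B', hB', hBB'⟩ := exists_superset_of_mem_historiesFrom hc hk k.le_succ hB
  have hAB' : A = B' := (isBlockFamily_of_mem_historiesFrom hc hπ k).eq_of_subset hAk hB'
    (hAB.trans hBB')
  rwa [Subset.antisymm hAB (hAB' ▸ hBB')]

theorem ncard_sep_historiesFrom_mem_notMem [Finite α] (A : Finset α) {k : ℕ} (hk : 1 ≤ k)
    (hm : k + 1 ≤ m) (hπ : IsBlockFamily π) (hcard : π.card = m) :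
    {c ∈ historiesFrom m π | A ∈ c k ∧ A ∉ c (k + 1)}.ncard =
      (if IsUnionOfBlocks A π then branchCount k (innerBlocks A π).card m else 0) *
        numHistories k := by
  induction m, hm using Nat.le_induction generalizing π with
  | base =>
    rw [ncard_sep_historiesFrom_succ hπ hk]
    simp only [update_self, update_of_ne (Nat.succ_ne_self k).symm]
    have hterm : ∀ q ∈ π.powersetCard 2,
        {c ∈ historiesFrom k (merge π q) | A ∈ c k ∧ A ∉ π}.ncard =
          if q = innerBlocks A π ∧ IsUnionOfBlocks A π then numHistories k else 0 := by
      intro q hq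
      have hiff := hπ.mem_merge_and_notMem_iff (A := A) hq
      by_cases h : A ∈ merge π q ∧ A ∉ π
      · rw [if_pos (hiff.1 h), ← ncard_historiesFrom (hπ.isBlockFamily_merge hq) hk
          (by rw [hπ.card_merge hq, hcard]; rfl)]
        congr 1
        ext c
        exact ⟨fun hc => hc.1, fun hc => ⟨hc, hc.2.1 ▸ h.1, h.2⟩⟩
      · rw [if_neg (mt hiff.2 h),
          Set.ncard_eq_zero (finite_historiesFrom.subset (Set.sep_subset _ _))]
        exact Set.eq_empty_of_forall_notMem fun c hc => h ⟨hc.1.2.1 ▸ hc.2.1, hc.2.2⟩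
    rw [sum_congr rfl hterm, branchCount_self_add_one]
    by_cases hU : IsUnionOfBlocks A π
    · simp [hU, mem_powersetCard, innerBlocks_subset]
    · simp [hU]
  | succ m hm ih =>
    rw [ncard_sep_historiesFrom_succ hπ (by omega)]
    simp only [update_of_ne (show k ≠ m + 1 by omega),
      update_of_ne (show k + 1 ≠ m + 1 by omega)]
    rw [sum_congr rfl fun q hq => ih (hπ.isBlockFamily_merge hq)
        (by rw [hπ.card_merge hq, hcard]; rfl),
      ← sum_mul, hπ.sum_merge (fun r => branchCount k r m), hcard, branchCount_succ hk hm]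

end Histories

section Kingman

theorem kLevel_eq_iff {n k : ℕ} {A : Finset (Fin n)} {c : ℕ → Finset (Finset (Fin n))}
    (hc : IsHistory n c) (hk : 1 ≤ k) :
    KLevel A c = k ↔ A ∈ c k ∧ A ∉ c (k + 1) := by
  have hπ := isBlockFamily_image_singleton (univ : Finset (Fin n))
  have hbdd : BddAbove {j | A ∈ c j} := ⟨n, fun j hj => by
    by_contra h
    rw [Set.mem_ofPred_eq, hc.1 j (Or.inr (by omega))] at hj
    exact notMem_empty A hj⟩
  constructor
  · intro hK
    have hne : {j | A ∈ c j}.Nonempty := by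
      by_contra h
      rw [Set.not_nonempty_iff_eq_empty] at h
      rw [KLevel, h, csSup_empty, bot_eq_zero] at hK
      omega
    have hAk : A ∈ c k := hK ▸ Nat.sSup_mem hne hbdd
    exact ⟨hAk, fun h => by have := le_csSup hbdd h; rw [KLevel] at hK; omega⟩
  · rintro ⟨hAk, hAk'⟩
    refine le_antisymm (csSup_le ⟨k, hAk⟩ fun j hj => ?_) (le_csSup hbdd hAk)
    by_contra h
    exact hAk' (mem_succ_of_mem_historiesFrom hc hπ hk (by omega) hAk hj)

theorem setOf_isHistory (n : ℕ) :
    {c | IsHistory n c} = historiesFrom n (univ.image fun i => ({i} : Finset (Fin n))) :=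
  rfl

theorem card_image_singleton {n : ℕ} (s : Finset (Fin n)) :
    (s.image fun i => ({i} : Finset (Fin n))).card = s.card :=
  card_image_of_injective _ singleton_injective

theorem ncard_setOf_isHistory {n : ℕ} (hn : 1 ≤ n) :
    {c | IsHistory n c}.ncard = numHistories n := by
  rw [setOf_isHistory]
  exact ncard_historiesFrom (isBlockFamily_image_singleton _) hn
    (by rw [card_image_singleton, card_univ, Fintype.card_fin])

theorem ncard_setOf_isHistory_kLevel_eq {n i k : ℕ} {A : Finset (Fin n)} (hA : A.card = i)
    (hk : 1 ≤ k) (hkn : k + 1 ≤ n) :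
    {c | IsHistory n c ∧ KLevel A c = k}.ncard = branchCount k i n * numHistories k := by
  have hset : {c | IsHistory n c ∧ KLevel A c = k} =
      {c ∈ historiesFrom n (univ.image fun i => ({i} : Finset (Fin n))) |
        A ∈ c k ∧ A ∉ c (k + 1)} := by
    ext c
    exact and_congr_right fun hc => kLevel_eq_iff hc hk
  rw [hset, ncard_sep_historiesFrom_mem_notMem A hk hkn (isBlockFamily_image_singleton _)
    (by rw [card_image_singleton, card_univ, Fintype.card_fin]),
    if_pos (isUnionOfBlocks_image_singleton (subset_univ A)),
    innerBlocks_image_singleton (subset_univ A), card_image_singleton, hA]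

theorem histProb_kLevel_eq {n i k : ℕ} {A : Finset (Fin n)} (hA : A.card = i) (hk : 1 ≤ k)
    (hkn : k + 1 ≤ n) :
    histProb n (fun c => KLevel A c = k) =
      (branchCount k i n * numHistories k : ℕ) / (numHistories n : ℝ) := by
  rw [histProb, ncard_setOf_isHistory_kLevel_eq hA hk hkn, ncard_setOf_isHistory (by omega)]

end Kingman

section Arithmetic

theorem two_mul_choose_two (k : ℕ) : 2 * k.choose 2 = k * (k - 1) := by
  rw [Nat.choose_two_right, Nat.mul_div_cancel' (Nat.even_mul_pred_self k).two_dvd]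

theorem descFactorial_succ_eq_mul_pred (n t : ℕ) :
    n.descFactorial (t + 1) = n * (n - 1).descFactorial t := by
  rcases n with _ | n
  · simp
  · exact Nat.succ_descFactorial_succ n t

theorem two_pow_mul_prod_Ioc_choose_two (a t : ℕ) :
    2 ^ t * ∏ j ∈ Ioc a (a + t), j.choose 2 =
      (a + t).descFactorial t * (a + t - 1).descFactorial t := by
  induction t with
  | zero => simp
  | succ t ih =>
    rw [← add_assoc, prod_Ioc_succ_top (Nat.le_add_right a t), pow_succ,
      descFactorial_succ_eq_mul_pred (a + t + 1), descFactorial_succ_eq_mul_pred (a + t + 1 - 1),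
      Nat.add_sub_cancel]
    calc 2 ^ t * 2 * ((∏ j ∈ Ioc a (a + t), j.choose 2) * (a + t + 1).choose 2)
        = (2 ^ t * ∏ j ∈ Ioc a (a + t), j.choose 2) * (2 * (a + t + 1).choose 2) := by ring
      _ = _ := by rw [ih, two_mul_choose_two, Nat.add_sub_cancel]; ring

theorem branchCount_mul_le {t s k : ℕ} (hk : 2 ≤ k) (hks : k ≤ s) :
    (t + s + 1 - k).choose t * (∏ j ∈ Ioc 2 (t + 2), j.choose 2) * k.choose 2 *
        ((t + s + 1) * (t + s) * (t + s + 2).choose (t + 2)) ≤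
      (t + 2) * k ^ 2 * ∏ j ∈ Ioc s (s + (t + 2)), j.choose 2 := by
  refine Nat.le_of_mul_le_mul_left ?_ (show 0 < 2 ^ (t + 2) by positivity)
  have hin := two_pow_mul_prod_Ioc_choose_two 2 t
  rw [add_comm 2 t] at hin
  have hout := two_pow_mul_prod_Ioc_choose_two s (t + 2)
  have hfac₁ : (t + 2).descFactorial t * 2 = (t + 2).factorial := by
    have := Nat.factorial_mul_descFactorial (show t ≤ t + 2 by omega)
    rwa [Nat.add_sub_cancel_left, Nat.factorial_two, mul_comm] at this
  have hfac₂ : (t + 2 - 1).descFactorial t = (t + 1) * t.factorial := by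
    have := Nat.factorial_mul_descFactorial (show t ≤ t + 1 by omega)
    rw [Nat.add_sub_cancel_left, Nat.factorial_one, one_mul] at this
    rw [show t + 2 - 1 = t + 1 by omega, this, Nat.factorial_succ]
  have hchoose : (t + s + 1 - k).choose t * t.factorial = (t + s + 1 - k).descFactorial t := by
    rw [Nat.descFactorial_eq_factorial_mul_choose, mul_comm]
  have hmono : (t + s + 1 - k).descFactorial t ≤ (t + s - 1).descFactorial t :=
    Nat.descFactorial_le t (by omega)
  have htop : (s + (t + 2)).descFactorial (t + 2) =
      (t + 2).factorial * (t + s + 2).choose (t + 2) := by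
    rw [Nat.descFactorial_eq_factorial_mul_choose, show s + (t + 2) = t + s + 2 by omega]
  have hbot : (s + (t + 2) - 1).descFactorial (t + 2) =
      (t + s + 1) * ((t + s) * (t + s - 1).descFactorial t) := by
    rw [show s + (t + 2) - 1 = (t + s - 1) + 1 + 1 by omega, Nat.succ_descFactorial_succ,
      Nat.succ_descFactorial_succ, show t + s - 1 + 1 = t + s by omega]
  calc 2 ^ (t + 2) * ((t + s + 1 - k).choose t * (∏ j ∈ Ioc 2 (t + 2), j.choose 2) *
        k.choose 2 * ((t + s + 1) * (t + s) * (t + s + 2).choose (t + 2)))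
      = (2 ^ t * ∏ j ∈ Ioc 2 (t + 2), j.choose 2) * (t + s + 1 - k).choose t *
          (2 * k.choose 2) * (2 * ((t + s + 1) * (t + s) * (t + s + 2).choose (t + 2))) := by
        ring
    _ = ((t + 2).descFactorial t * 2) * (t + 1) * ((t + s + 1 - k).choose t * t.factorial) *
          (k * (k - 1)) * ((t + s + 1) * (t + s) * (t + s + 2).choose (t + 2)) := by
        rw [hin, hfac₂, two_mul_choose_two]; ring
    _ = (t + 2).factorial * (t + 1) * (t + s + 1 - k).descFactorial t *
          (k * (k - 1)) * ((t + s + 1) * (t + s) * (t + s + 2).choose (t + 2)) := by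
        rw [hfac₁, hchoose]
    _ ≤ (t + 2).factorial * (t + 2) * (t + s - 1).descFactorial t *
          (k * k) * ((t + s + 1) * (t + s) * (t + s + 2).choose (t + 2)) := by
        gcongr
        · omega
        · omega
    _ = 2 ^ (t + 2) * ((t + 2) * k ^ 2 * ∏ j ∈ Ioc s (s + (t + 2)), j.choose 2) := by
        rw [mul_left_comm (2 ^ (t + 2)), hout, htop, hbot]
        ring

theorem branchCount_mul_numHistories_le {n i k : ℕ} (hi : 2 ≤ i) (hk : 2 ≤ k)
    (hik : i + k ≤ n) :
    branchCount k i n * numHistories k * ((n - 1) * (n - 2) * n.choose i) ≤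
      i * k ^ 2 * numHistories n := by
  obtain ⟨t, rfl⟩ : ∃ t, i = t + 2 := ⟨i - 2, by omega⟩
  obtain ⟨s, rfl⟩ : ∃ s, n = t + s + 2 := ⟨n - (t + 2), by omega⟩
  have hbc := branchCount_of_eq_add t (s + 1 - k) (by omega : 1 ≤ k)
    (show t + s + 2 = k + 1 + t + (s + 1 - k) by omega)
  rw [show t + (s + 1 - k) = t + s + 1 - k by omega, show k - 1 + (s + 1 - k) = s by omega] at hbc
  have hk' : numHistories k * ∏ j ∈ Ioc (k - 1) s, j.choose 2 =
      k.choose 2 * numHistories s := by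
    obtain ⟨k, rfl⟩ : ∃ k', k = k' + 1 := ⟨k - 1, by omega⟩
    rw [numHistories, prod_Ioc_succ_top (by omega), Nat.add_sub_cancel, mul_right_comm,
      prod_Ioc_consecutive _ (by omega) (by omega), mul_comm, numHistories]
  have hn : numHistories (t + s + 2) =
      numHistories s * ∏ j ∈ Ioc s (s + (t + 2)), j.choose 2 := by
    rw [numHistories, numHistories, prod_Ioc_consecutive _ (by omega) (by omega),
      show s + (t + 2) = t + s + 2 by omega]
  rw [hbc, hn, show t + s + 2 - 1 = t + s + 1 by omega, show t + s + 2 - 2 = t + s by omega]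
  calc (t + s + 1 - k).choose t * (∏ j ∈ Ioc 2 (t + 2), j.choose 2) *
          (∏ j ∈ Ioc (k - 1) s, j.choose 2) * numHistories k *
          ((t + s + 1) * (t + s) * (t + s + 2).choose (t + 2))
      = (t + s + 1 - k).choose t * (∏ j ∈ Ioc 2 (t + 2), j.choose 2) *
          ((t + s + 1) * (t + s) * (t + s + 2).choose (t + 2)) *
          (numHistories k * ∏ j ∈ Ioc (k - 1) s, j.choose 2) := by ring
    _ = (t + s + 1 - k).choose t * (∏ j ∈ Ioc 2 (t + 2), j.choose 2) * k.choose 2 *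
          ((t + s + 1) * (t + s) * (t + s + 2).choose (t + 2)) * numHistories s := by
        rw [hk']; ring
    _ ≤ (t + 2) * k ^ 2 * (∏ j ∈ Ioc s (s + (t + 2)), j.choose 2) * numHistories s :=
        Nat.mul_le_mul_right _ (branchCount_mul_le hk (by omega))
    _ = (t + 2) * k ^ 2 * (numHistories s * ∏ j ∈ Ioc s (s + (t + 2)), j.choose 2) := by ring

end Arithmetic

end KingmanCoalescent

/-- Bound on the distribution of the initial level of a branch of order `i ≥ 2`:
`P(K_A = k) ≤ i k² / ((n−1)(n−2) C(n,i))`. -/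
theorem stmt7 (n i k : ℕ) (A : Finset (Fin n)) (hA : A.card = i)
    (hi : 2 ≤ i) (hk : 2 ≤ k) (hkn : k ≤ n - i) :
    histProb n (fun c => KLevel A c = k) ≤
      i * k ^ 2 / (((n : ℝ) - 1) * ((n : ℝ) - 2) * (n.choose i : ℝ)) := by
  have hle := KingmanCoalescent.branchCount_mul_numHistories_le hi hk (show i + k ≤ n by omega)
  have hn : (2 : ℝ) < n := by exact_mod_cast (show 2 < n by omega)
  have hchoose : (0 : ℝ) < n.choose i := by exact_mod_cast Nat.choose_pos (show i ≤ n by omega)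
  rw [KingmanCoalescent.histProb_kLevel_eq hA (by omega) (by omega),
    div_le_div_iff₀ (by exact_mod_cast KingmanCoalescent.numHistories_pos n)
      (mul_pos (mul_pos (by linarith) (by linarith)) hchoose)]
  have := (Nat.cast_le (α := ℝ)).2 hle
  push_cast [Nat.cast_sub (show 1 ≤ n by omega), Nat.cast_sub (show 2 ≤ n by omega)] at this ⊢
  exact this
end
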